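/- arXiv:1003.3411 — 11 statements merged into one kernel-verified Lean document; each statement's English description precedes it below -/
import Mathlib

section
/- Let X be an infinite-dimensional real Banach space and let (A_n) be an approximation scheme in X with associated map K. Then (X,(A_n)) satisfies Shapiro's Theorem if and only if there exist a constant c > 0 and an infinite set N₀ ⊆ ℕ such that for every n ∈ N₀ there exists x_n ∈ X with x_n not in the closure of A_n and E(x_n, A_n) ≤ c · E(x_n, A_{K(n)}). -/
open Metric Filter

/-- `(A n)` together with the map `K` is an approximation scheme in `X`. -/
structure IsApproximationScheme {X : Type*} [NormedAddCommGroup X] [NormedSpace ℝ X]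
    (A : ℕ → Set X) (K : ℕ → ℕ) : Prop where
  subset_succ : ∀ n, A n ⊆ A (n + 1)
  ne_succ : ∀ n, A n ≠ A (n + 1)
  le_K : ∀ n, n ≤ K n
  add_mem : ∀ n, ∀ x ∈ A n, ∀ y ∈ A n, x + y ∈ A (K n)
  smul_mem : ∀ n (c : ℝ), ∀ x ∈ A n, c • x ∈ A n
  dense_union : Dense (⋃ n, A n)

/-- `(X, (A n))` satisfies Shapiro's Theorem: for every nonincreasing positive sequence
`ε` converging to `0` there is `x` with `E(x, A n) ≠ O(ε n)`. -/
def SatisfiesShapiro {X : Type*} [NormedAddCommGroup X] (A : ℕ → Set X) : Prop :=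
  ∀ ε : ℕ → ℝ, (∀ n, 0 < ε n) → Antitone ε → Tendsto ε atTop (nhds 0) →
    ∃ x : X, ¬ ∃ M : ℝ, ∀ n, infDist x (A n) ≤ M * ε n

namespace ShapiroAux

variable {X : Type*} [NormedAddCommGroup X] [NormedSpace ℝ X]
  {A : ℕ → Set X} {K : ℕ → ℕ}

lemma scheme_mono (hA : IsApproximationScheme A K) : ∀ {i j : ℕ}, i ≤ j → A i ⊆ A j := by
  intro i j h
  induction h with
  | refl => exact subset_rfl
  | step _ ih => exact ih.trans (hA.subset_succ _)

lemma scheme_nonempty (hA : IsApproximationScheme A K) {n : ℕ} (hn : 1 ≤ n) :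
    (A n).Nonempty := by
  obtain ⟨k, rfl⟩ := Nat.exists_eq_add_of_le hn
  rw [Set.nonempty_iff_ne_empty]
  intro h
  refine hA.ne_succ k ?_
  have h1 : A k ⊆ A (k + 1) := hA.subset_succ k
  have : A (k + 1) = ∅ := by rw [← h]; ring_nf
  rw [this] at h1 ⊢
  exact Set.subset_eq_empty h1 rfl

lemma zero_mem (hA : IsApproximationScheme A K) {n : ℕ} (hn : (A n).Nonempty) :
    (0 : X) ∈ A n := by
  obtain ⟨x, hx⟩ := hn
  simpa using hA.smul_mem n 0 x hx

lemma infDist_le_norm (hA : IsApproximationScheme A K) (n : ℕ) (x : X) :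
    infDist x (A n) ≤ ‖x‖ := by
  rcases Set.eq_empty_or_nonempty (A n) with h | h
  · rw [h, infDist_empty]; positivity
  · simpa using infDist_le_dist_of_mem (zero_mem hA h)

lemma infDist_anti (hA : IsApproximationScheme A K) {i j : ℕ} (hij : i ≤ j) (hi : 1 ≤ i)
    (x : X) : infDist x (A j) ≤ infDist x (A i) :=
  infDist_le_infDist_of_subset (scheme_mono hA hij) (scheme_nonempty hA hi)

lemma forward (hA : IsApproximationScheme A K) (hS : SatisfiesShapiro A) :
    ∃ c : ℝ, 0 < c ∧ ∃ N₀ : Set ℕ, N₀.Infinite ∧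
        ∀ n ∈ N₀, ∃ x : X, x ∉ closure (A n) ∧
          infDist x (A n) ≤ c * infDist x (A (K n)) := by
  by_contra hre
  push_neg at hre
  -- the set of "good" indices for c = 2 is finite
  set S : Set ℕ := {n | ∃ x : X, x ∉ closure (A n) ∧
      infDist x (A n) ≤ 2 * infDist x (A (K n))} with hSdef
  have hSfin : S.Finite := by
    by_contra hSinf
    obtain ⟨n, hnS, hbad⟩ := hre 2 two_pos S hSinf
    obtain ⟨x, hx1, hx2⟩ := hnS
    exact absurd hx2 (not_le.2 (hbad x hx1))
  obtain ⟨n₀, hn₀⟩ : ∃ n₀ : ℕ, ∀ n ∈ S, n < n₀ := by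
    obtain ⟨b, hb⟩ := hSfin.bddAbove
    exact ⟨b + 1, fun n hn => Nat.lt_succ_of_le (hb hn)⟩
  -- halving property
  have H : ∀ n, max n₀ 1 ≤ n → ∀ x : X,
      infDist x (A (K n)) ≤ (1 / 2) * infDist x (A n) := by
    intro n hn x
    have hn1 : 1 ≤ n := le_trans (le_max_right _ _) hn
    have hnS : n ∉ S := fun h => absurd (hn₀ n h) (not_lt.2 (le_trans (le_max_left _ _) hn))
    by_cases hx : x ∈ closure (A n)
    · have h0 : infDist x (A n) = 0 := infDist_zero_of_mem_closure hx
      have h1 : infDist x (A (K n)) ≤ infDist x (A n) :=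
        infDist_anti hA (hA.le_K n) hn1 x
      rw [h0] at h1 ⊢
      linarith
    · have : ¬ (infDist x (A n) ≤ 2 * infDist x (A (K n))) := by
        intro hcontra
        exact hnS ⟨x, hx, hcontra⟩
      linarith
  -- the index sequence
  set m : ℕ → ℕ := fun i => Nat.rec (max n₀ 1) (fun _ p => max (K p) (p + 1)) i with hm
  have hm0 : m 0 = max n₀ 1 := rfl
  have hmstep : ∀ i, m (i + 1) = max (K (m i)) (m i + 1) := fun i => rfl
  have hmlb : ∀ i, max n₀ 1 ≤ m i := by
    intro i
    induction i with
    | zero => exact le_rfl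
    | succ i ih => exact le_trans ih (le_trans (Nat.le_succ _) (le_max_right _ _))
  have hmsm : StrictMono m := by
    refine strictMono_nat_of_lt_succ fun i => ?_
    exact lt_of_lt_of_le (Nat.lt_succ_self _) (le_max_right _ _)
  have hm1 : ∀ i, 1 ≤ m i := fun i => le_trans (le_max_right _ _) (hmlb i)
  -- the decay along m
  have key : ∀ (x : X) (i : ℕ), infDist x (A (m i)) ≤ (1 / 2 : ℝ) ^ i * ‖x‖ := by
    intro x i
    induction i with
    | zero => simpa using infDist_le_norm hA (m 0) x
    | succ i ih =>
      have h1 : infDist x (A (m (i + 1))) ≤ infDist x (A (K (m i))) := by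
        refine infDist_le_infDist_of_subset (scheme_mono hA ?_) ?_
        · rw [hmstep i]; exact le_max_left _ _
        · exact scheme_nonempty hA (le_trans (hm1 i) (hA.le_K (m i)))
      have h2 : infDist x (A (K (m i))) ≤ (1/2) * infDist x (A (m i)) :=
        H (m i) (hmlb i) x
      calc infDist x (A (m (i + 1))) ≤ (1/2) * infDist x (A (m i)) := le_trans h1 h2
        _ ≤ (1/2) * ((1/2:ℝ)^i * ‖x‖) := by linarith
        _ = (1/2:ℝ)^(i+1) * ‖x‖ := by ring
  -- define ε
  set φ : ℕ → ℕ := fun n => Nat.findGreatest (fun i => m i ≤ n) n with hφ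
  set ε : ℕ → ℝ := fun n => (1/2 : ℝ) ^ (φ n) with hε
  have hεpos : ∀ n, 0 < ε n := fun n => by positivity
  have hφmono : Monotone φ := by
    intro n n' hnn'
    calc φ n ≤ Nat.findGreatest (fun i => m i ≤ n') n :=
          Nat.findGreatest_mono_left (fun i hi => le_trans hi hnn') n
      _ ≤ φ n' := Nat.findGreatest_mono_right _ hnn'
  have hεanti : Antitone ε := by
    intro n n' hnn'
    exact pow_le_pow_of_le_one (by norm_num) (by norm_num) (hφmono hnn')
  have hφtop : Tendsto φ atTop atTop := by
    refine tendsto_atTop_atTop.2 fun b => ⟨m b, fun n hn => ?_⟩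
    exact Nat.le_findGreatest (le_trans (hmsm.le_apply) hn) hn
  have hεlim : Tendsto ε atTop (nhds 0) := by
    have h2 : Tendsto (fun k : ℕ => (1/2 : ℝ) ^ k) atTop (nhds 0) :=
      tendsto_pow_atTop_nhds_zero_of_lt_one (by norm_num) (by norm_num)
    exact h2.comp hφtop
  -- Shapiro gives a bad x, but ‖x‖ is a valid constant
  obtain ⟨x, hx⟩ := hS ε hεpos hεanti hεlim
  refine hx ⟨‖x‖, fun n => ?_⟩
  rcases Nat.eq_zero_or_pos (φ n) with h0 | hpos
  · have : ε n = 1 := by rw [hε]; simp [h0]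
    rw [this, mul_one]
    exact infDist_le_norm hA n x
  · have hPn : m (φ n) ≤ n := by
      have := Nat.findGreatest_eq_iff.1 (rfl : Nat.findGreatest (fun i => m i ≤ n) n = φ n)
      exact this.2.1 (Nat.pos_iff_ne_zero.1 hpos)
    have h1 : infDist x (A n) ≤ infDist x (A (m (φ n))) :=
      infDist_le_infDist_of_subset (scheme_mono hA hPn) (scheme_nonempty hA (hm1 _))
    calc infDist x (A n) ≤ (1/2:ℝ)^(φ n) * ‖x‖ := le_trans h1 (key x (φ n))
      _ = ‖x‖ * ε n := by rw [hε]; ring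

end ShapiroAux

namespace ShapiroAux

variable {X : Type*} [NormedAddCommGroup X] [NormedSpace ℝ X]
  {A : ℕ → Set X} {K : ℕ → ℕ}

lemma backward [CompleteSpace X] (hA : IsApproximationScheme A K)
    (h : ∃ c : ℝ, 0 < c ∧ ∃ N₀ : Set ℕ, N₀.Infinite ∧
        ∀ n ∈ N₀, ∃ x : X, x ∉ closure (A n) ∧
          infDist x (A n) ≤ c * infDist x (A (K n))) :
    SatisfiesShapiro A := by
  obtain ⟨c, hc, N₀, hN₀, hwit⟩ := h
  intro ε hεpos hεanti hεlim
  by_contra hcon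
  push_neg at hcon
  -- the closed sets
  set F : ℕ → Set X := fun M => {x | ∀ n, infDist x (A n) ≤ (M : ℝ) * ε n} with hF
  have hFclosed : ∀ M, IsClosed (F M) := by
    intro M
    have : F M = ⋂ n, (fun x => infDist x (A n)) ⁻¹' Set.Iic ((M : ℝ) * ε n) := by
      ext x; simp [hF, Set.mem_iInter]
    rw [this]
    exact isClosed_iInter fun n => IsClosed.preimage (continuous_infDist_pt _) isClosed_Iic
  have hFcover : (⋃ M, F M) = Set.univ := by
    refine Set.eq_univ_of_forall fun x => ?_
    obtain ⟨M, hM⟩ := hcon x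
    refine Set.mem_iUnion.2 ⟨⌈max M 0⌉₊, fun n => ?_⟩
    refine (hM n).trans (mul_le_mul_of_nonneg_right ?_ (hεpos n).le)
    exact (le_max_left M 0).trans (Nat.le_ceil _)
  obtain ⟨M, hMint⟩ := nonempty_interior_of_iUnion_of_closed hFclosed hFcover
  obtain ⟨w, hw⟩ := hMint
  obtain ⟨r, hr, hball⟩ := Metric.isOpen_iff.1 isOpen_interior w hw
  have hball : ball w r ⊆ F M := hball.trans interior_subset
  -- a point of the union close to w
  have hdense := hA.dense_union
  obtain ⟨a, ha, haw⟩ : ∃ a ∈ ⋃ n, A n, dist a w < r / 2 := by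
    have := hdense.exists_dist_lt w (by positivity : (0:ℝ) < r / 2)
    obtain ⟨a, ha, h2⟩ := this
    exact ⟨a, ha, by rwa [dist_comm]⟩
  obtain ⟨m, ham⟩ := Set.mem_iUnion.1 ha
  -- choose j ≥ m with M * ε j < r / (4 * c)
  obtain ⟨j, hjm, hjε⟩ : ∃ j, m ≤ j ∧ (M : ℝ) * ε j < r / (4 * c) := by
    have hδ : (0:ℝ) < r / (4 * c) / ((M : ℝ) + 1) := by positivity
    have := (hεlim.eventually (gt_mem_nhds hδ)).exists_forall_of_atTop
    obtain ⟨N, hN⟩ := (eventually_atTop.1 (hεlim.eventually (gt_mem_nhds hδ)))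
    refine ⟨max m N, le_max_left _ _, ?_⟩
    have h1 : ε (max m N) < r / (4 * c) / ((M : ℝ) + 1) := hN _ (le_max_right _ _)
    have h2 : (M : ℝ) * ε (max m N) ≤ ((M : ℝ) + 1) * ε (max m N) := by
      nlinarith [(hεpos (max m N)).le, hεpos (max m N)]
    calc (M : ℝ) * ε (max m N) ≤ ((M : ℝ) + 1) * ε (max m N) := h2
      _ < ((M : ℝ) + 1) * (r / (4 * c) / ((M : ℝ) + 1)) := by
          have : (0:ℝ) < (M : ℝ) + 1 := by positivity
          exact (mul_lt_mul_iff_right₀ this).2 h1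
      _ = r / (4 * c) := by field_simp
  -- choose n in N₀ with n ≥ max (K j) 1
  obtain ⟨n, hnN₀, hnge⟩ : ∃ n ∈ N₀, max (K j) 1 ≤ n := by
    by_contra hno
    push_neg at hno
    exact hN₀ (Set.Finite.subset (Set.finite_Iio (max (K j) 1)) fun n hn => hno n hn)
  have hn1 : 1 ≤ n := le_trans (le_max_right _ _) hnge
  have hKjn : K j ≤ n := le_trans (le_max_left _ _) hnge
  -- the witness
  obtain ⟨x₀, hx₀cl, hx₀⟩ := hwit n hnN₀
  have hAn : (A n).Nonempty := scheme_nonempty hA hn1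
  have hd : 0 < infDist x₀ (A n) := by
    rcases lt_or_eq_of_le (infDist_nonneg (x := x₀) (s := A n)) with h | h
    · exact h
    · exact absurd ((mem_closure_iff_infDist_zero hAn).2 h.symm) hx₀cl
  set d := infDist x₀ (A n) with hdd
  obtain ⟨a₀, ha₀, ha₀d⟩ : ∃ a₀ ∈ A n, dist x₀ a₀ < 2 * d :=
    (infDist_lt_iff hAn).1 (by linarith)
  set y := x₀ - a₀ with hy
  have hynorm : ‖y‖ < 2 * d := by rwa [hy, ← dist_eq_norm]
  have hypos : 0 < ‖y‖ := by
    rw [hy, norm_sub_pos_iff]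
    intro hcontr
    have h0 : infDist x₀ (A n) = 0 := infDist_zero_of_mem (hcontr ▸ ha₀)
    rw [← hdd] at h0
    linarith
  -- pointwise farness of y from A n
  have hyfar : ∀ z ∈ A n, d / c ≤ ‖y - z‖ := by
    intro z hz
    have hzk : a₀ + z ∈ A (K n) := hA.add_mem n a₀ ha₀ z hz
    have h1 : infDist x₀ (A (K n)) ≤ ‖y - z‖ := by
      have := infDist_le_dist_of_mem (x := x₀) hzk
      rwa [dist_eq_norm, show x₀ - (a₀ + z) = y - z by rw [hy]; abel] at this
    have h2 : d / c ≤ infDist x₀ (A (K n)) := by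
      rw [div_le_iff₀ hc]
      nlinarith [hx₀]
    linarith
  -- the perturbed point
  set μ : ℝ := r / (2 * ‖y‖) with hμ
  have hμpos : 0 < μ := by positivity
  set x := a + μ • y with hx
  have hxball : x ∈ ball w r := by
    have : dist x w ≤ dist x a + dist a w := dist_triangle _ _ _
    have hxa : dist x a = μ * ‖y‖ := by
      rw [hx, dist_eq_norm]
      simp [norm_smul, abs_of_pos hμpos]
    have hμy : μ * ‖y‖ = r / 2 := by
      rw [hμ]; field_simp
    rw [mem_ball]
    rw [hxa, hμy] at this
    linarith
  have hxF : x ∈ F M := hball hxball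
  have hcontr : r / (4 * c) ≤ infDist x (A j) := by
    have hAj : (A j).Nonempty := ⟨a, scheme_mono hA hjm ham⟩
    by_contra hlt
    push_neg at hlt
    obtain ⟨b, hb, hdb⟩ := (infDist_lt_iff hAj).1 hlt
    have haj : a ∈ A j := scheme_mono hA hjm ham
    have hba : b + (-1 : ℝ) • a ∈ A (K j) := by
      refine hA.add_mem j b hb _ (hA.smul_mem j (-1) a haj)
    have hban : μ⁻¹ • (b - a) ∈ A n := by
      refine hA.smul_mem n μ⁻¹ _ (scheme_mono hA hKjn ?_)
      simpa [sub_eq_add_neg, neg_smul] using hba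
    have key : d / c ≤ ‖y - μ⁻¹ • (b - a)‖ := hyfar _ hban
    have hxb : dist x b = μ * ‖y - μ⁻¹ • (b - a)‖ := by
      rw [hx, dist_eq_norm]
      have h6 : μ • (μ⁻¹ • (b - a)) = b - a := smul_inv_smul₀ (ne_of_gt hμpos) _
      have : a + μ • y - b = μ • (y - μ⁻¹ • (b - a)) := by
        rw [show μ • (y - μ⁻¹ • (b - a)) = μ • y - μ • (μ⁻¹ • (b - a)) from smul_sub _ _ _, h6]
        abel
      rw [this]
      simp [norm_smul, abs_of_pos hμpos]
    rw [hxb] at hdb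
    refine absurd hdb (not_lt.2 ?_)
    have h1 : μ * (d / c) ≤ μ * ‖y - μ⁻¹ • (b - a)‖ :=
      mul_le_mul_of_nonneg_left key hμpos.le
    refine le_trans ?_ h1
    have hy0 : ‖y‖ ≠ 0 := ne_of_gt hypos
    have hc0 : c ≠ 0 := ne_of_gt hc
    have e : μ * (d / c) = (r * d) / (2 * ‖y‖ * c) := by
      rw [hμ]; field_simp
    rw [e, div_le_div_iff₀ (by positivity) (by positivity)]
    nlinarith [hynorm, hr, hc, hd, mul_pos hr hc]
  have := hxF j
  have hεj := hjε
  linarith [this, hcontr, hεj]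

end ShapiroAux


theorem stmt0 {X : Type*} [NormedAddCommGroup X] [NormedSpace ℝ X] [CompleteSpace X]
    (hX : ¬ FiniteDimensional ℝ X) (A : ℕ → Set X) (K : ℕ → ℕ)
    (hA : IsApproximationScheme A K) :
    SatisfiesShapiro A ↔
      ∃ c : ℝ, 0 < c ∧ ∃ N₀ : Set ℕ, N₀.Infinite ∧
        ∀ n ∈ N₀, ∃ x : X, x ∉ closure (A n) ∧
          infDist x (A n) ≤ c * infDist x (A (K n)) := by
  exact ⟨ShapiroAux.forward hA, ShapiroAux.backward hA⟩
end

section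
/- Let X be an infinite-dimensional real Banach space and let (A_n) be an approximation scheme in X. Then (X,(A_n)) satisfies Shapiro's Theorem if and only if there is no nonincreasing sequence (ε_n) of positive reals converging to 0 such that E(x,A_n) ≤ ε_n·‖x‖ for all x ∈ X and all n ∈ ℕ. -/
open Metric Filter

/-- `E(B, A) = sup_{b ∈ B} E(b, A)`. -/
noncomputable def setApproxError {X : Type*} [NormedAddCommGroup X] (B A : Set X) : ℝ :=
  ⨆ b : B, infDist (b : X) A

/-- `dens_n`-style quantity: `E(S(X), A) = sup_{‖x‖ = 1} E(x, A)`. -/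
noncomputable def sphDist {X : Type*} [NormedAddCommGroup X] (A : Set X) : ℝ :=
  ⨆ x : {x : X // ‖x‖ = 1}, infDist (x : X) A

private lemma infDist_smul_le' {X : Type*} [NormedAddCommGroup X] [NormedSpace ℝ X]
    {A : Set X} (hA : ∀ (c : ℝ), ∀ x ∈ A, c • x ∈ A) (c : ℝ) (x : X) :
    infDist (c • x) A ≤ |c| * infDist x A := by
  rcases A.eq_empty_or_nonempty with h | hne
  · simp [h]
  rcases eq_or_ne c 0 with rfl | hc
  · obtain ⟨a, ha⟩ := hne
    have h0 : (0 : X) ∈ A := by simpa using hA 0 a ha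
    simp [infDist_zero_of_mem h0]
  · apply le_of_forall_pos_le_add
    intro η hη
    have hcpos : 0 < |c| := abs_pos.2 hc
    have hlt : infDist x A < infDist x A + η / |c| :=
      lt_add_of_pos_right _ (div_pos hη hcpos)
    obtain ⟨a, haA, hd⟩ := (infDist_lt_iff hne).1 hlt
    calc infDist (c • x) A ≤ dist (c • x) (c • a) := infDist_le_dist_of_mem (hA c a haA)
      _ = |c| * dist x a := by rw [dist_smul₀, Real.norm_eq_abs]
      _ ≤ |c| * (infDist x A + η / |c|) :=
          mul_le_mul_of_nonneg_left hd.le hcpos.le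
      _ = |c| * infDist x A + η := by field_simp
private lemma infDist_add_le' {X : Type*} [NormedAddCommGroup X]
    {A B : Set X} (hAB : ∀ x ∈ A, ∀ y ∈ A, x + y ∈ B) (hne : A.Nonempty) (u v : X) :
    infDist (u + v) B ≤ infDist u A + infDist v A := by
  apply le_of_forall_pos_le_add
  intro η hη
  obtain ⟨a, haA, hda⟩ := (infDist_lt_iff hne).1
    (lt_add_of_pos_right (infDist u A) (half_pos hη))
  obtain ⟨b, hbA, hdb⟩ := (infDist_lt_iff hne).1
    (lt_add_of_pos_right (infDist v A) (half_pos hη))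
  calc infDist (u + v) B ≤ dist (u + v) (a + b) := infDist_le_dist_of_mem (hAB a haA b hbA)
    _ ≤ dist u a + dist v b := dist_add_add_le _ _ _ _
    _ ≤ infDist u A + infDist v A + η := by linarith

theorem stmt1 {X : Type*} [NormedAddCommGroup X] [NormedSpace ℝ X] [CompleteSpace X]
    (hX : ¬ FiniteDimensional ℝ X) (A : ℕ → Set X) (K : ℕ → ℕ)
    (hA : IsApproximationScheme A K) :
    SatisfiesShapiro A ↔
      ¬ ∃ ε : ℕ → ℝ, (∀ n, 0 < ε n) ∧ Antitone ε ∧ Tendsto ε atTop (nhds 0) ∧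
        ∀ (x : X) (n : ℕ), infDist x (A n) ≤ ε n * ‖x‖ := by
  constructor
  · rintro hS ⟨ε, hpos, hanti, htend, hbound⟩
    obtain ⟨x, hx⟩ := hS ε hpos hanti htend
    exact hx ⟨‖x‖, fun n => by rw [mul_comm]; exact hbound x n⟩
  · intro hnot ε hpos hanti htend
    by_contra hcon
    push_neg at hcon
    have hmono : Monotone A := monotone_nat_of_le_succ hA.subset_succ
    have h0mem : ∀ n, (A n).Nonempty → (0 : X) ∈ A n := by
      rintro n ⟨a, ha⟩
      simpa using hA.smul_mem n 0 a ha
    -- find n0 with A n0 nonempty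
    have : Nonempty X := ⟨0⟩
    obtain ⟨x₁, hx₁⟩ := hA.dense_union.nonempty
    obtain ⟨n0, hn0'⟩ := Set.mem_iUnion.1 hx₁
    have hn0 : (A n0).Nonempty := ⟨x₁, hn0'⟩
    -- Baire category
    set F : ℕ → Set X := fun M => {x | ∀ n, infDist x (A n) ≤ (M : ℝ) * ε n} with hF
    have hFclosed : ∀ M : ℕ, IsClosed (F M) := by
      intro M
      have : F M = ⋂ n, (fun x => infDist x (A n)) ⁻¹' Set.Iic ((M : ℝ) * ε n) := by
        ext x; simp [hF, Set.mem_iInter]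
      rw [this]
      exact isClosed_iInter fun n => isClosed_Iic.preimage (continuous_infDist_pt _)
    have hFunion : ⋃ M, F M = Set.univ := by
      apply Set.eq_univ_of_forall
      intro x
      obtain ⟨M, hM⟩ := hcon x
      exact Set.mem_iUnion.2 ⟨⌈M⌉₊, fun n =>
        le_trans (hM n) (mul_le_mul_of_nonneg_right (Nat.le_ceil M) (hpos n).le)⟩
    obtain ⟨M, hMint⟩ := nonempty_interior_of_iUnion_of_closed hFclosed hFunion
    obtain ⟨x₀, hx₀⟩ := hMint
    obtain ⟨r, hr, hball⟩ := Metric.mem_nhds_iff.1 (mem_interior_iff_mem_nhds.1 hx₀)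
    have hx₀F : x₀ ∈ F M := hball (mem_ball_self hr)
    set C : ℝ := 4 * M / r with hC
    -- key estimate
    have key : ∀ n, n0 ≤ n → ∀ y : X, infDist y (A (K n)) ≤ C * ε n * ‖y‖ := by
      intro n hn y
      have hAn : (A n).Nonempty := hn0.mono (hmono hn)
      have hAKn : (A (K n)).Nonempty := hAn.mono (hmono (hA.le_K n))
      rcases eq_or_ne y 0 with rfl | hy
      · simp [infDist_zero_of_mem (h0mem _ hAKn)]
      · have hynorm : 0 < ‖y‖ := norm_pos_iff.2 hy
        set c : ℝ := (r / 2) * ‖y‖⁻¹ with hc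
        have hcpos : 0 < c := by positivity
        have hzball : x₀ + c • y ∈ ball x₀ r := by
          rw [mem_ball, dist_eq_norm]
          have : x₀ + c • y - x₀ = c • y := by abel
          rw [this, norm_smul, Real.norm_eq_abs, abs_of_pos hcpos, hc]
          rw [mul_assoc, inv_mul_cancel₀ hynorm.ne', mul_one]
          linarith
        have hzF : x₀ + c • y ∈ F M := hball hzball
        have hsum : infDist (c • y) (A (K n)) ≤ 2 * M * ε n := by
          have h1 := infDist_add_le' (hA.add_mem n) hAn (x₀ + c • y) (-x₀)
          have he : x₀ + c • y + -x₀ = c • y := by abel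
          rw [he] at h1
          have h2 : infDist (-x₀) (A n) ≤ infDist x₀ (A n) := by
            have := infDist_smul_le' (hA.smul_mem n) (-1 : ℝ) x₀
            simpa using this
          have h3 := hzF n
          have h4 := hx₀F n
          calc infDist (c • y) (A (K n)) ≤ infDist (x₀ + c • y) (A n) + infDist (-x₀) (A n) := h1
            _ ≤ (M : ℝ) * ε n + (M : ℝ) * ε n := by
                exact add_le_add h3 (h2.trans h4)
            _ = 2 * M * ε n := by ring
        have h5 : infDist y (A (K n)) ≤ |c⁻¹| * infDist (c • y) (A (K n)) := by
          have := infDist_smul_le' (hA.smul_mem (K n)) c⁻¹ (c • y)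
          rwa [smul_smul, inv_mul_cancel₀ hcpos.ne', one_smul] at this
        have hcinv : |c⁻¹| = 2 * ‖y‖ / r := by
          rw [abs_of_pos (inv_pos.2 hcpos), hc]
          field_simp
        rw [hcinv] at h5
        have hM0 : (0 : ℝ) ≤ (M : ℝ) := Nat.cast_nonneg M
        calc infDist y (A (K n)) ≤ 2 * ‖y‖ / r * infDist (c • y) (A (K n)) := h5
          _ ≤ 2 * ‖y‖ / r * (2 * M * ε n) := by
              apply mul_le_mul_of_nonneg_left hsum (by positivity)
          _ = C * ε n * ‖y‖ := by rw [hC]; field_simp; ring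
    -- build the new sequence
    classical
    set h : ℕ → ℕ := fun m => Nat.findGreatest (fun n => n0 ≤ n ∧ K n ≤ m) m with hhdef
    set D : ℝ := max C (1 / ε 0) with hD
    have hDpos : 0 < D := lt_of_lt_of_le (one_div_pos.2 (hpos 0)) (le_max_right _ _)
    have hhmono : Monotone h := fun m m' hmm' =>
      Nat.findGreatest_mono (fun n hn => ⟨hn.1, hn.2.trans hmm'⟩) hmm'
    have hhtend : Tendsto h atTop atTop := by
      rw [Filter.tendsto_atTop]
      intro N
      filter_upwards [eventually_ge_atTop (K (max N n0))] with m hm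
      have hw : max N n0 ≤ h m :=
        Nat.le_findGreatest (P := fun n => n0 ≤ n ∧ K n ≤ m)
          (le_trans (hA.le_K _) hm) ⟨le_max_right _ _, hm⟩
      exact le_trans (le_max_left _ _) hw
    set ε' : ℕ → ℝ := fun m => D * ε (h m) with hε'
    have hpos' : ∀ m, 0 < ε' m := fun m => mul_pos hDpos (hpos _)
    have hanti' : Antitone ε' := fun m m' hmm' =>
      mul_le_mul_of_nonneg_left (hanti (hhmono hmm')) hDpos.le
    have htend' : Tendsto ε' atTop (nhds 0) := by
      have := (htend.comp hhtend).const_mul D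
      simpa using this
    have hmain : ∀ (x : X) (m : ℕ), infDist x (A m) ≤ ε' m * ‖x‖ := by
      intro x m
      by_cases hw : ∃ n, n0 ≤ n ∧ K n ≤ m
      · obtain ⟨n, hn1, hn2⟩ := hw
        have hP : n0 ≤ h m ∧ K (h m) ≤ m :=
          Nat.findGreatest_spec (P := fun n => n0 ≤ n ∧ K n ≤ m)
            (le_trans (hA.le_K n) hn2) ⟨hn1, hn2⟩
        have hAKj : (A (K (h m))).Nonempty :=
          hn0.mono (hmono (le_trans hP.1 (hA.le_K (h m))))
        calc infDist x (A m) ≤ infDist x (A (K (h m))) :=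
              infDist_le_infDist_of_subset (hmono hP.2) hAKj
          _ ≤ C * ε (h m) * ‖x‖ := key (h m) hP.1 x
          _ ≤ D * ε (h m) * ‖x‖ := by
              apply mul_le_mul_of_nonneg_right _ (norm_nonneg x)
              exact mul_le_mul_of_nonneg_right (le_max_left _ _) (hpos _).le
          _ = ε' m * ‖x‖ := rfl
      · have hh0 : h m = 0 := by
          by_contra hne
          exact hw ⟨h m, (Nat.findGreatest_eq_iff.1 rfl).2.1 hne⟩
        have hD1 : 1 ≤ D * ε 0 := by
          have : 1 / ε 0 ≤ D := le_max_right _ _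
          calc (1 : ℝ) = (1 / ε 0) * ε 0 := by rw [one_div, inv_mul_cancel₀ (hpos 0).ne']
            _ ≤ D * ε 0 := mul_le_mul_of_nonneg_right this (hpos 0).le
        rcases (A m).eq_empty_or_nonempty with he | hne
        · rw [he, infDist_empty]
          have : 0 < ε' m := hpos' m
          positivity
        · calc infDist x (A m) ≤ dist x 0 := infDist_le_dist_of_mem (h0mem m hne)
            _ = ‖x‖ := by simp
            _ = 1 * ‖x‖ := (one_mul _).symm
            _ ≤ D * ε 0 * ‖x‖ := mul_le_mul_of_nonneg_right hD1 (norm_nonneg x)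
            _ = ε' m * ‖x‖ := by rw [hε']; simp [hh0]
    exact hnot ⟨ε', hpos', hanti', htend', hmain⟩
end

section
/- Let h : ℕ → ℕ be a map such that h(n) ≥ n for all n, and let (ε_n) be a nonincreasing sequence of positive real numbers converging to 0. Then there exists a nonincreasing sequence (ξ_n) of positive real numbers converging to 0 such that ξ_n ≥ ε_n and ξ_n ≤ 2·ξ_{h(n)} for every n. -/
open Filter

private def Hfun (h : ℕ → ℕ) (n : ℕ) : ℕ := max n ((Finset.range (n+1)).sup h)

private lemma le_Hfun (h : ℕ → ℕ) (n : ℕ) : n ≤ Hfun h n := le_max_left _ _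

private lemma h_le_Hfun (h : ℕ → ℕ) (n : ℕ) : h n ≤ Hfun h n :=
  le_trans (Finset.le_sup (Finset.self_mem_range_succ n)) (le_max_right _ _)

private lemma Hfun_mono (h : ℕ → ℕ) : Monotone (Hfun h) := fun a b hab =>
  max_le_max hab (Finset.sup_mono (Finset.range_subset_range.mpr (by omega)))

private def nseq (h : ℕ → ℕ) : ℕ → ℕ
  | 0 => 0
  | k+1 => Hfun h (nseq h k) + 1

private lemma nseq_strictMono (h : ℕ → ℕ) : StrictMono (nseq h) :=
  strictMono_nat_of_lt_succ fun k =>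
    lt_of_le_of_lt (le_Hfun h _) (Nat.lt_succ_self _)

private lemma self_le_nseq (h : ℕ → ℕ) (k : ℕ) : k ≤ nseq h k :=
  (nseq_strictMono h).le_apply

private noncomputable def cseq (h : ℕ → ℕ) (ε : ℕ → ℝ) : ℕ → ℝ
  | 0 => ε 0
  | k+1 => max (cseq h ε k / 2) (ε (nseq h (k+1)))

private noncomputable def Kfun (h : ℕ → ℕ) (m : ℕ) : ℕ :=
  Nat.findGreatest (fun k => nseq h k ≤ m) m

private lemma nseq_Kfun_le (h : ℕ → ℕ) (m : ℕ) : nseq h (Kfun h m) ≤ m :=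
  Nat.findGreatest_spec (P := fun k => nseq h k ≤ m) (Nat.zero_le m) (by simp [nseq])

private lemma lt_nseq_Kfun_succ (h : ℕ → ℕ) (m : ℕ) : m < nseq h (Kfun h m + 1) := by
  by_contra hc
  push_neg at hc
  have hb : Kfun h m + 1 ≤ m := le_trans (self_le_nseq h _) hc
  exact Nat.findGreatest_is_greatest (P := fun k => nseq h k ≤ m)
    (Nat.lt_succ_self _) hb hc

private lemma Kfun_mono (h : ℕ → ℕ) : Monotone (Kfun h) := fun a b hab =>
  Nat.findGreatest_mono (fun k hk => le_trans hk hab) hab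

private lemma le_Kfun (h : ℕ → ℕ) {k m : ℕ} (hk : nseq h k ≤ m) : k ≤ Kfun h m :=
  Nat.le_findGreatest (le_trans (self_le_nseq h k) hk) hk

private lemma eps_nseq_le_cseq (h : ℕ → ℕ) (ε : ℕ → ℝ) (k : ℕ) :
    ε (nseq h k) ≤ cseq h ε k := by
  cases k with
  | zero => simp [cseq, nseq]
  | succ k => exact le_max_right _ _

private lemma cseq_pos (h : ℕ → ℕ) (ε : ℕ → ℝ) (hpos : ∀ n, 0 < ε n) (k : ℕ) :
    0 < cseq h ε k :=
  lt_of_lt_of_le (hpos _) (eps_nseq_le_cseq h ε k)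

private lemma cseq_antitone (h : ℕ → ℕ) (ε : ℕ → ℝ) (hpos : ∀ n, 0 < ε n)
    (hmono : Antitone ε) : Antitone (cseq h ε) := by
  apply antitone_nat_of_succ_le
  intro k
  apply max_le
  · have := cseq_pos h ε hpos k; linarith
  · exact le_trans (hmono ((nseq_strictMono h).monotone (Nat.le_succ k)))
      (eps_nseq_le_cseq h ε k)

private lemma half_cseq_le (h : ℕ → ℕ) (ε : ℕ → ℝ) (k : ℕ) :
    cseq h ε k / 2 ≤ cseq h ε (k+1) := le_max_left _ _

private lemma cseq_tendsto (h : ℕ → ℕ) (ε : ℕ → ℝ) (hpos : ∀ n, 0 < ε n)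
    (hmono : Antitone ε) (hlim : Tendsto ε atTop (nhds 0)) :
    Tendsto (cseq h ε) atTop (nhds 0) := by
  rw [Metric.tendsto_atTop]
  intro δ hδ
  -- find N with ε n < δ/2 for n ≥ N
  have h2 : (0:ℝ) < δ/2 := by linarith
  obtain ⟨N, hN⟩ := (Metric.tendsto_atTop.mp hlim) (δ/2) h2
  have hNsmall : ∀ n ≥ N, ε n < δ/2 := by
    intro n hn
    have := hN n hn
    rw [Real.dist_eq, sub_zero, abs_of_pos (hpos n)] at this
    exact this
  -- key estimate
  have key : ∀ i, cseq h ε (N + i) ≤ max (cseq h ε N / 2^i) (δ/2) := by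
    intro i
    induction i with
    | zero => simp
    | succ i ih =>
      have h1 : cseq h ε (N + (i+1)) =
          max (cseq h ε (N+i) / 2) (ε (nseq h (N+i+1))) := by
        show cseq h ε ((N+i)+1) = _
        rfl
      rw [h1]
      apply max_le
      · calc cseq h ε (N+i) / 2 ≤ max (cseq h ε N / 2^i) (δ/2) / 2 := by linarith
          _ ≤ max (cseq h ε N / 2^(i+1)) (δ/2) := by
              rcases max_cases (cseq h ε N / 2^i) (δ/2) with ⟨he, _⟩ | ⟨he, _⟩ <;> rw [he]
              · rw [div_div, ← pow_succ]
                exact le_max_left _ _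
              · exact le_trans (by linarith) (le_max_right _ _)
      · have : N + i + 1 ≥ N := by omega
        have := hNsmall (nseq h (N+i+1)) (le_trans this (self_le_nseq h _))
        exact le_trans this.le (le_max_right _ _)
  -- choose i with cseq N / 2^i < δ
  obtain ⟨i, hi⟩ := pow_unbounded_of_one_lt (cseq h ε N / δ) (by norm_num : (1:ℝ) < 2)
  have hlt : cseq h ε N / 2^i < δ := by
    rw [div_lt_iff₀ hδ] at hi
    rw [div_lt_iff₀ (by positivity)]
    linarith
  refine ⟨N + i, fun n hn => ?_⟩
  rw [Real.dist_eq, sub_zero, abs_of_pos (cseq_pos h ε hpos n)]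
  calc cseq h ε n ≤ cseq h ε (N+i) := cseq_antitone h ε hpos hmono hn
    _ ≤ max (cseq h ε N / 2^i) (δ/2) := key i
    _ < δ := max_lt hlt (by linarith)

theorem stmt2 (h : ℕ → ℕ) (hh : ∀ n, n ≤ h n) (ε : ℕ → ℝ) (hpos : ∀ n, 0 < ε n)
    (hmono : Antitone ε) (hlim : Tendsto ε atTop (nhds 0)) :
    ∃ ξ : ℕ → ℝ, (∀ n, 0 < ξ n) ∧ Antitone ξ ∧ Tendsto ξ atTop (nhds 0) ∧
      (∀ n, ε n ≤ ξ n) ∧ ∀ n, ξ n ≤ 2 * ξ (h n) := by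
  refine ⟨fun m => cseq h ε (Kfun h m), fun m => cseq_pos h ε hpos _,
    fun a b hab => cseq_antitone h ε hpos hmono (Kfun_mono h hab), ?_, ?_, ?_⟩
  · -- tendsto: Kfun → atTop, compose
    have hK : Tendsto (Kfun h) atTop atTop := by
      rw [tendsto_atTop_atTop]
      intro k
      exact ⟨nseq h k, fun m hm => le_Kfun h hm⟩
    exact (cseq_tendsto h ε hpos hmono hlim).comp hK
  · intro m
    exact le_trans (hmono (nseq_Kfun_le h m)) (eps_nseq_le_cseq h ε _)
  · intro m
    set k := Kfun h m with hk
    -- m < nseq (k+1) = Hfun (nseq k) + 1, so m ≤ Hfun (nseq k)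
    have hm1 : m ≤ Hfun h (nseq h k) := by
      have := lt_nseq_Kfun_succ h m
      rw [← hk] at this
      simpa [nseq] using Nat.lt_succ_iff.mp this
    -- h m ≤ Hfun m ≤ Hfun (Hfun (nseq k)) < nseq (k+2)
    have hm2 : h m < nseq h (k+2) := by
      have h1 : h m ≤ Hfun h (Hfun h (nseq h k)) :=
        le_trans (h_le_Hfun h m) (Hfun_mono h hm1)
      have h2 : Hfun h (Hfun h (nseq h k)) < nseq h (k+2) := by
        show _ < Hfun h (nseq h (k+1)) + 1
        have : Hfun h (nseq h k) ≤ nseq h (k+1) := by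
          show _ ≤ Hfun h (nseq h k) + 1; omega
        exact Nat.lt_succ_of_le (Hfun_mono h this)
      omega
    have hK2 : Kfun h (h m) ≤ k + 1 := by
      by_contra hc
      push_neg at hc
      have : nseq h (k+2) ≤ nseq h (Kfun h (h m)) :=
        (nseq_strictMono h).monotone hc
      have := le_trans this (nseq_Kfun_le h (h m))
      omega
    have hc1 : cseq h ε (k+1) ≤ cseq h ε (Kfun h (h m)) :=
      cseq_antitone h ε hpos hmono hK2
    have hc2 : cseq h ε k / 2 ≤ cseq h ε (k+1) := half_cseq_le h ε k
    linarith
end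

section
/- Let X be an infinite-dimensional real Banach space and let (A_n) be an approximation scheme in X satisfying property (P) with constants a, b > 0, i.e. for every n ≥ 1 there exists x ∈ X with ‖x‖ = 1 and E(x, A_n) ≥ 1/(a·n^b). Suppose moreover that there exists an integer c ≥ 2 such that A_n + A_n ⊆ A_{c·n} for all n ≥ 1. Then (X,(A_n)) satisfies Shapiro's Theorem. -/
open Metric Filter

/-- Helper: lower bound on `infDist` from a pointwise lower bound. -/
lemma le_infDist_of_forall {X : Type*} [NormedAddCommGroup X] {s : Set X} {x : X} {d : ℝ}
    (hs : s.Nonempty) (h : ∀ y ∈ s, d ≤ dist x y) : d ≤ infDist x s := by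
  by_contra hlt
  push_neg at hlt
  obtain ⟨y, hy, hd⟩ := (infDist_lt_iff hs).mp hlt
  exact absurd (h y hy) (not_le.mpr hd)

set_option maxHeartbeats 1000000 in
theorem stmt3 {X : Type*} [NormedAddCommGroup X] [NormedSpace ℝ X] [CompleteSpace X]
    (hX : ¬ FiniteDimensional ℝ X) (A : ℕ → Set X) (K : ℕ → ℕ)
    (hA : IsApproximationScheme A K) (a b : ℝ) (ha : 0 < a) (hb : 0 < b)
    (hP : ∀ n : ℕ, 1 ≤ n → ∃ x : X, ‖x‖ = 1 ∧ 1 / (a * (n : ℝ) ^ b) ≤ infDist x (A n))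
    (c : ℕ) (hc : 2 ≤ c)
    (hadd : ∀ n : ℕ, 1 ≤ n → ∀ x ∈ A n, ∀ y ∈ A n, x + y ∈ A (c * n)) :
    SatisfiesShapiro A := by
  intro ε hε hεanti hεlim
  -- basic facts about the scheme
  have monoA : ∀ {m n : ℕ}, m ≤ n → A m ⊆ A n := by
    intro m n h
    exact monotone_nat_of_le_succ (f := A) hA.subset_succ h
  have h0mem : ∀ n, 1 ≤ n → (0 : X) ∈ A n := by
    intro n hn
    obtain ⟨x, hx1, -⟩ := Set.exists_of_ssubset ((hA.subset_succ 0).ssubset_of_ne (hA.ne_succ 0))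
    have : (0:ℝ) • x ∈ A 1 := hA.smul_mem 1 0 x hx1
    rw [zero_smul] at this
    exact monoA hn this
  have hne : ∀ n, 1 ≤ n → (A n).Nonempty := fun n hn => ⟨0, h0mem n hn⟩
  -- the constants
  set D : ℝ := (c : ℝ) ^ b with hDdef
  have hD1 : 1 ≤ D := Real.one_le_rpow (by exact_mod_cast le_trans one_le_two hc) hb.le
  have hD0 : 0 < D := lt_of_lt_of_le one_pos hD1
  set γ : ℝ := 1 / (4 * D) with hγdef
  have hγ0 : 0 < γ := by positivity
  have hγ4 : γ ≤ 1 / 4 := by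
    rw [hγdef]
    rw [div_le_div_iff₀ (by positivity) (by norm_num)]
    nlinarith
  set θ : ℝ := γ / 8 with hθdef
  have hθ0 : 0 < θ := by positivity
  have hθ2 : θ ≤ 1 / 2 := by rw [hθdef]; linarith
  have hθ1 : θ < 1 := lt_of_le_of_lt hθ2 (by norm_num)
  -- the key lemma: unit vectors uniformly far from A m
  have key : ∀ m : ℕ, 1 ≤ m → ∃ w : X, ‖w‖ = 1 ∧ γ ≤ infDist w (A m) := by
    intro m hm
    obtain ⟨Kk, hKk⟩ : ∃ Kk : ℕ, a * (m : ℝ) ^ b < 2 ^ Kk :=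
      pow_unbounded_of_one_lt _ one_lt_two
    have hc0 : 0 < c := by omega
    have hckm : ∀ k : ℕ, 1 ≤ c ^ k * m := fun k => Nat.mul_pos (pow_pos hc0 k) hm
    obtain ⟨y, hy1, hyd⟩ := hP (c ^ Kk * m) (hckm Kk)
    set d : ℕ → ℝ := fun k => infDist y (A (c ^ k * m)) with hddef
    have hdanti : ∀ {k l : ℕ}, k ≤ l → d l ≤ d k := by
      intro k l h
      exact infDist_le_infDist_of_subset
        (monoA (Nat.mul_le_mul_right m (Nat.pow_le_pow_right hc0 h))) (hne _ (hckm k))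
    have hcast : ((c ^ Kk * m : ℕ) : ℝ) ^ b = D ^ Kk * (m : ℝ) ^ b := by
      push_cast
      rw [Real.mul_rpow (by positivity) (by positivity), ← Real.rpow_natCast (c:ℝ) Kk,
        ← Real.rpow_mul (by positivity), mul_comm (Kk:ℝ) b,
        Real.rpow_mul (by positivity), Real.rpow_natCast, hDdef]
    have hdK : (a * ((m:ℝ) ^ b) * D ^ Kk)⁻¹ ≤ d Kk := by
      have : 1 / (a * ((c ^ Kk * m : ℕ) : ℝ) ^ b) ≤ d Kk := hyd
      rw [hcast] at this
      rw [show a * (m:ℝ) ^ b * D ^ Kk = a * (D ^ Kk * (m:ℝ) ^ b) by ring, ← one_div]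
      exact this
    have hdKpos : 0 < d Kk := lt_of_lt_of_le (by positivity) hdK
    have hd0le : d 0 ≤ 1 := by
      have h1 : d 0 ≤ dist y 0 := infDist_le_dist_of_mem (h0mem _ (hckm 0))
      rw [dist_zero_right, hy1] at h1
      exact h1
    -- find a step with controlled ratio
    have hex : ∃ k, k ≤ Kk ∧ 1 / (2 * D) * d k ≤ d (k + 1) := by
      by_contra hcon
      push_neg at hcon
      have hind : ∀ j, j ≤ Kk → d j ≤ (1 / (2 * D)) ^ j * d 0 := by
        intro j
        induction j with
        | zero => intro _; simp
        | succ j ih =>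
          intro hj
          have h1 : d (j + 1) ≤ 1 / (2 * D) * d j := (hcon j (by omega)).le
          have h2 := ih (by omega)
          calc d (j + 1) ≤ 1 / (2 * D) * d j := h1
            _ ≤ 1 / (2 * D) * ((1 / (2 * D)) ^ j * d 0) := by
                apply mul_le_mul_of_nonneg_left h2 (by positivity)
            _ = (1 / (2 * D)) ^ (j + 1) * d 0 := by ring
      have h3 : (a * ((m:ℝ) ^ b) * D ^ Kk)⁻¹ ≤ (1 / (2 * D)) ^ Kk := by
        calc (a * ((m:ℝ) ^ b) * D ^ Kk)⁻¹ ≤ d Kk := hdK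
          _ ≤ (1 / (2 * D)) ^ Kk * d 0 := hind Kk le_rfl
          _ ≤ (1 / (2 * D)) ^ Kk * 1 := by
              apply mul_le_mul_of_nonneg_left hd0le (by positivity)
          _ = (1 / (2 * D)) ^ Kk := mul_one _
      have h4 : (1 / (2 * D)) ^ Kk = ((2:ℝ) ^ Kk * D ^ Kk)⁻¹ := by
        rw [div_pow, one_pow, mul_pow]
        simp
      rw [h4] at h3
      have h5 : (2:ℝ) ^ Kk * D ^ Kk ≤ a * ((m:ℝ) ^ b) * D ^ Kk :=
        (inv_le_inv₀ (by positivity) (by positivity)).mp h3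
      have h6 : (2:ℝ) ^ Kk ≤ a * (m:ℝ) ^ b :=
        le_of_mul_le_mul_right h5 (by positivity)
      linarith
    obtain ⟨k, hkK, hk⟩ := hex
    have hdkpos : 0 < d k := lt_of_lt_of_le hdKpos (hdanti hkK)
    have hdk1pos : 0 < d (k + 1) := lt_of_lt_of_le (by positivity) hk
    -- pick a near-best approximant p
    obtain ⟨p, hp, hpd⟩ := (infDist_lt_iff (hne _ (hckm k))).mp
      (show d k < 2 * d k by linarith)
    have hpk1 : p ∈ A (c ^ (k + 1) * m) :=
      monoA (Nat.mul_le_mul_right m (Nat.pow_le_pow_right hc0 (by omega))) hp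
    have hrpos : 0 < dist y p := lt_of_lt_of_le hdk1pos (infDist_le_dist_of_mem hpk1)
    set r : ℝ := dist y p with hrdef
    refine ⟨r⁻¹ • (y - p), ?_, ?_⟩
    · rw [norm_smul, Real.norm_eq_abs, abs_of_pos (by positivity), ← dist_eq_norm, ← hrdef,
        inv_mul_cancel₀ hrpos.ne']
    · -- γ ≤ infDist w (A m), via infDist w (A (c^k m))
      have hsub : A m ⊆ A (c ^ k * m) := monoA (Nat.le_mul_of_pos_left m (pow_pos hc0 k))
      apply le_trans ?_ (infDist_le_infDist_of_subset hsub (hne m hm))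
      apply le_infDist_of_forall (hne _ (hckm k))
      intro q hq
      have hzmem : p + r • q ∈ A (c ^ (k + 1) * m) := by
        have := hadd (c ^ k * m) (hckm k) p hp (r • q) (hA.smul_mem _ r q hq)
        have heq : c * (c ^ k * m) = c ^ (k + 1) * m := by ring
        rwa [heq] at this
      have h1 : d (k + 1) ≤ dist y (p + r • q) := infDist_le_dist_of_mem hzmem
      have heq2 : dist (r⁻¹ • (y - p)) q = r⁻¹ * dist y (p + r • q) := by
        rw [dist_eq_norm, dist_eq_norm]
        rw [show r⁻¹ • (y - p) - q = r⁻¹ • (y - (p + r • q)) by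
          have hr1 : r⁻¹ * r = 1 := inv_mul_cancel₀ hrpos.ne'
          match_scalars <;> simp [hr1] <;> ring_nf <;> simp [hr1]]
        rw [norm_smul, Real.norm_eq_abs, abs_of_pos (by positivity)]
      rw [heq2]
      have h2 : 1 / (2 * D) * d k * (2 * d k)⁻¹ ≤ dist y (p + r • q) * r⁻¹ := by
        apply mul_le_mul (le_trans hk h1)
        · exact inv_anti₀ hrpos hpd.le
        · positivity
        · positivity
      calc γ = 1 / (2 * D) * d k * (2 * d k)⁻¹ := by
            rw [hγdef]
            field_simp [hD0.ne', hdkpos.ne']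
            ring
        _ ≤ dist y (p + r • q) * r⁻¹ := h2
        _ = r⁻¹ * dist y (p + r • q) := mul_comm _ _
  -- the recursive construction
  have step : ∀ (j : ℕ) (S : X), ∃ p : ℕ × X, 1 ≤ p.1 ∧ ‖p.2‖ = 1 ∧
      γ ≤ infDist p.2 (A (c * p.1)) ∧ (∃ s ∈ A p.1, dist S s ≤ γ / 4 * θ ^ (j + 1)) ∧
      ((j : ℝ) + 1) * ε p.1 ≤ γ / 4 * θ ^ (j + 1) := by
    intro j S
    have hrpos : 0 < γ / 4 * θ ^ (j + 1) := by positivity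
    obtain ⟨s, hsU, hs⟩ := hA.dense_union.exists_dist_lt S hrpos
    obtain ⟨q, hq⟩ := Set.mem_iUnion.mp hsU
    have hδpos : 0 < (γ / 4 * θ ^ (j + 1)) / ((j : ℝ) + 1) := by positivity
    obtain ⟨N, hN⟩ := (hεlim.eventually (gt_mem_nhds hδpos)).exists_forall_of_atTop
    set n : ℕ := max (max q 1) N with hndef
    have hn1 : 1 ≤ n := le_trans (le_max_right q 1) (le_trans (le_max_left _ N) le_rfl)
    have hqn : q ≤ n := le_trans (le_max_left q 1) (le_max_left _ N)
    have hNn : N ≤ n := le_max_right _ N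
    have hcn1 : 1 ≤ c * n := le_trans hn1 (Nat.le_mul_of_pos_left n (by omega))
    obtain ⟨w, hw1, hwd⟩ := key (c * n) hcn1
    refine ⟨(n, w), hn1, hw1, hwd, ⟨s, monoA hqn hq, hs.le⟩, ?_⟩
    have hεn := hN n hNn
    have : ((j : ℝ) + 1) * ε n ≤ ((j : ℝ) + 1) * ((γ / 4 * θ ^ (j + 1)) / ((j : ℝ) + 1)) := by
      apply mul_le_mul_of_nonneg_left hεn.le (by positivity)
    show ((j : ℝ) + 1) * ε n ≤ γ / 4 * θ ^ (j + 1)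
    calc ((j : ℝ) + 1) * ε n ≤ ((j : ℝ) + 1) * ((γ / 4 * θ ^ (j + 1)) / ((j : ℝ) + 1)) := this
      _ = γ / 4 * θ ^ (j + 1) := by field_simp
  choose f hf using step
  let F : ℕ → ℕ × X × X := fun j => Nat.rec (1, 0, 0)
    (fun i ih => ((f i ih.2.2).1, (f i ih.2.2).2, ih.2.2 + θ ^ (i + 1) • (f i ih.2.2).2)) j
  set nn : ℕ → ℕ := fun j => (F j).1 with hnndef
  set w : ℕ → X := fun j => (F j).2.1 with hwdef
  set Sp : ℕ → X := fun j => (F j).2.2 with hSpdef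
  have hSps : ∀ j, Sp (j + 1) = Sp j + θ ^ (j + 1) • w (j + 1) := fun j => rfl
  have hSp0 : Sp 0 = 0 := rfl
  have hw0 : w 0 = 0 := rfl
  have hprop : ∀ j : ℕ, 1 ≤ nn (j + 1) ∧ ‖w (j + 1)‖ = 1 ∧
      γ ≤ infDist (w (j + 1)) (A (c * nn (j + 1))) ∧
      (∃ s ∈ A (nn (j + 1)), dist (Sp j) s ≤ γ / 4 * θ ^ (j + 1)) ∧
      ((j : ℝ) + 1) * ε (nn (j + 1)) ≤ γ / 4 * θ ^ (j + 1) := fun j => hf j (Sp j)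
  -- summability of the series
  have hwnorm : ∀ k, ‖θ ^ k • w k‖ ≤ θ ^ k := by
    intro k
    rw [norm_smul, Real.norm_eq_abs, abs_of_pos (pow_pos hθ0 k)]
    cases k with
    | zero => simp [hw0]
    | succ k =>
      rw [(hprop k).2.1, mul_one]
  have hsumgeo : Summable (fun k : ℕ => θ ^ k) := summable_geometric_of_lt_one hθ0.le hθ1
  have hnormsum : Summable (fun k : ℕ => ‖θ ^ k • w k‖) :=
    Summable.of_nonneg_of_le (fun _ => norm_nonneg _) hwnorm hsumgeo
  have hsum : Summable (fun k : ℕ => θ ^ k • w k) := Summable.of_norm hnormsum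
  set x : X := ∑' k, θ ^ k • w k with hxdef
  have hSpsum : ∀ j, Sp j = ∑ k ∈ Finset.range (j + 1), θ ^ k • w k := by
    intro j
    induction j with
    | zero => simp [hSp0, hw0]
    | succ j ih => rw [Finset.sum_range_succ, ← ih, hSps]
  have htail : ∀ j : ℕ, ‖x - Sp j‖ ≤ γ / 4 * θ ^ j := by
    intro j
    have h1 : x - Sp j = ∑' k : ℕ, θ ^ (k + (j + 1)) • w (k + (j + 1)) := by
      rw [hSpsum j, sub_eq_iff_eq_add']
      exact (Summable.sum_add_tsum_nat_add (j + 1) hsum).symm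
    have hsum2 : Summable (fun k : ℕ => ‖θ ^ (k + (j + 1)) • w (k + (j + 1))‖) :=
      (summable_nat_add_iff (f := fun k : ℕ => ‖θ ^ k • w k‖) (j + 1)).mpr hnormsum
    have h2 : ‖∑' k : ℕ, θ ^ (k + (j + 1)) • w (k + (j + 1))‖ ≤ ∑' k : ℕ, θ ^ (k + (j + 1)) := by
      apply le_trans (norm_tsum_le_tsum_norm hsum2)
      apply Summable.tsum_le_tsum (fun k => hwnorm _) hsum2
      exact (summable_nat_add_iff (f := fun k : ℕ => θ ^ k) (j + 1)).mpr hsumgeo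
    have h3 : ∑' k : ℕ, θ ^ (k + (j + 1)) = θ ^ (j + 1) * (1 - θ)⁻¹ := by
      simp_rw [pow_add]
      rw [tsum_mul_right, tsum_geometric_of_lt_one hθ0.le hθ1, mul_comm]
    have h4 : θ ^ (j + 1) * (1 - θ)⁻¹ ≤ γ / 4 * θ ^ j := by
      have hinv : (1 - θ)⁻¹ ≤ 2 := by
        rw [show (2:ℝ) = (2⁻¹)⁻¹ by norm_num]
        exact inv_anti₀ (by norm_num) (by linarith)
      have : θ ^ (j + 1) * (1 - θ)⁻¹ ≤ θ ^ (j + 1) * 2 :=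
        mul_le_mul_of_nonneg_left hinv (by positivity)
      apply le_trans this
      rw [pow_succ, hθdef]
      calc θ ^ j * (γ / 8) * 2 = γ / 4 * θ ^ j := by ring
        _ ≤ γ / 4 * θ ^ j := le_rfl
    rw [h1]
    exact le_trans h2 (h3 ▸ h4)
  -- the main lower bound
  have hmain : ∀ j : ℕ, ((j : ℝ) + 1) * ε (nn (j + 1)) ≤ infDist x (A (nn (j + 1))) := by
    intro j
    obtain ⟨hn1, hw1, hwd, ⟨s, hsA, hss⟩, hεb⟩ := hprop j
    apply le_infDist_of_forall (hne _ hn1)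
    intro y hy
    have hz : y + (-1 : ℝ) • s ∈ A (c * nn (j + 1)) :=
      hadd _ hn1 y hy _ (hA.smul_mem _ _ s hsA)
    have hz' : y - s ∈ A (c * nn (j + 1)) := by
      rwa [neg_one_smul, ← sub_eq_add_neg] at hz
    have hzz : (θ ^ (j + 1))⁻¹ • (y - s) ∈ A (c * nn (j + 1)) := hA.smul_mem _ _ _ hz'
    have h4 : γ ≤ dist (w (j + 1)) ((θ ^ (j + 1))⁻¹ • (y - s)) :=
      le_trans hwd (infDist_le_dist_of_mem hzz)
    have h5 : θ ^ (j + 1) * γ ≤ ‖θ ^ (j + 1) • w (j + 1) - (y - s)‖ := by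
      have heq : θ ^ (j + 1) • w (j + 1) - (y - s)
          = θ ^ (j + 1) • (w (j + 1) - (θ ^ (j + 1))⁻¹ • (y - s)) := by
        rw [smul_sub, smul_smul, mul_inv_cancel₀ (pow_ne_zero _ hθ0.ne'), one_smul]
      rw [heq, norm_smul, Real.norm_eq_abs, abs_of_pos (pow_pos hθ0 _)]
      rw [dist_eq_norm] at h4
      exact mul_le_mul_of_nonneg_left h4 (pow_pos hθ0 _).le
    have hxy : x - y = (θ ^ (j + 1) • w (j + 1) - (y - s)) + ((Sp j - s) + (x - Sp (j + 1))) := by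
      rw [hSps]
      abel
    have hlow : θ ^ (j + 1) * γ - ‖Sp j - s‖ - ‖x - Sp (j + 1)‖ ≤ dist x y := by
      rw [dist_eq_norm, hxy]
      have h6 := norm_add_le (Sp j - s) (x - Sp (j + 1))
      have h7 := norm_le_norm_add_norm_sub' (θ ^ (j + 1) • w (j + 1) - (y - s) + (Sp j - s + (x - Sp (j + 1)))) (Sp j - s + (x - Sp (j + 1)))
      have h8 : ‖θ ^ (j + 1) • w (j + 1) - (y - s)‖ ≤
          ‖θ ^ (j + 1) • w (j + 1) - (y - s) + (Sp j - s + (x - Sp (j + 1)))‖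
          + ‖Sp j - s + (x - Sp (j + 1))‖ := by
        calc ‖θ ^ (j + 1) • w (j + 1) - (y - s)‖
            = ‖(θ ^ (j + 1) • w (j + 1) - (y - s) + (Sp j - s + (x - Sp (j + 1)))) - (Sp j - s + (x - Sp (j + 1)))‖ := by abel_nf
          _ ≤ _ := norm_sub_le _ _
      linarith [h5, h6]
    have hss' : ‖Sp j - s‖ ≤ γ / 4 * θ ^ (j + 1) := by
      rw [← dist_eq_norm]; exact hss
    have htl : ‖x - Sp (j + 1)‖ ≤ γ / 4 * θ ^ (j + 1) := htail (j + 1)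
    have hfinal : ((j : ℝ) + 1) * ε (nn (j + 1)) ≤ dist x y := by
      have : γ / 2 * θ ^ (j + 1) ≤ dist x y := by
        have : θ ^ (j + 1) * γ - γ / 4 * θ ^ (j + 1) - γ / 4 * θ ^ (j + 1)
            = γ / 2 * θ ^ (j + 1) := by ring
        linarith [hlow, hss', htl]
      have h9 : ((j : ℝ) + 1) * ε (nn (j + 1)) ≤ γ / 2 * θ ^ (j + 1) := by
        apply le_trans hεb
        have : (0:ℝ) ≤ γ / 4 * θ ^ (j + 1) := by positivity
        nlinarith [pow_pos hθ0 (j + 1)]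
      linarith
    exact hfinal
  -- conclusion
  refine ⟨x, ?_⟩
  rintro ⟨M, hM⟩
  obtain ⟨j, hj⟩ := exists_nat_gt M
  have h1 := hmain j
  have h2 := hM (nn (j + 1))
  have h3 := hε (nn (j + 1))
  have h4 : ((j : ℝ) + 1) ≤ M :=
    le_of_mul_le_mul_right (le_trans h1 h2) h3
  linarith
end

section
/- Let X be an infinite-dimensional real Banach space, and let (A_n) and (B_n) be approximation schemes in X such that (X,(A_n)) satisfies Shapiro's Theorem and liminf_{n→∞} E(S(X) ∩ B_n, A_n) < 1, where E(S(X) ∩ B_n, A_n) = sup { E(b, A_n) : b ∈ B_n, ‖b‖ = 1 }. Then (X,(B_n)) also satisfies Shapiro's Theorem. -/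
open Metric Filter

lemma infDist_le_norm_of_smulClosed {X : Type*} [NormedAddCommGroup X] [NormedSpace ℝ X]
    {A : Set X} (h : ∀ (c : ℝ), ∀ x ∈ A, c • x ∈ A) (x : X) :
    infDist x A ≤ ‖x‖ := by
  rcases A.eq_empty_or_nonempty with hA | ⟨a, ha⟩
  · simp [hA, norm_nonneg]
  · have h0 : (0 : X) ∈ A := by simpa using h 0 a ha
    simpa [dist_eq_norm] using infDist_le_dist_of_mem h0

lemma infDist_smul_le_of_smulClosed {X : Type*} [NormedAddCommGroup X] [NormedSpace ℝ X]
    {A : Set X} (h : ∀ (c : ℝ), ∀ x ∈ A, c • x ∈ A) (c : ℝ) (x : X) :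
    infDist (c • x) A ≤ |c| * infDist x A := by
  rcases A.eq_empty_or_nonempty with hA | hne
  · simp [hA]
  · refine le_of_forall_pos_le_add fun η hη => ?_
    have hd : 0 < η / (|c| + 1) := by positivity
    obtain ⟨a, ha, hda⟩ := (infDist_lt_iff hne).mp
      (lt_add_of_pos_right (infDist x A) hd)
    have h1 : infDist (c • x) A ≤ dist (c • x) (c • a) := infDist_le_dist_of_mem (h c a ha)
    rw [dist_smul₀, Real.norm_eq_abs] at h1
    have h2 : |c| * dist x a ≤ |c| * (infDist x A + η / (|c| + 1)) :=
      mul_le_mul_of_nonneg_left hda.le (abs_nonneg c)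
    have h3 : |c| * (η / (|c| + 1)) ≤ η := by
      rw [mul_comm, div_mul_eq_mul_div, div_le_iff₀ (by positivity : (0:ℝ) < |c| + 1)]
      nlinarith [abs_nonneg c, hη.le]
    nlinarith [infDist_nonneg (s := A) (x := x)]

set_option maxHeartbeats 1000000 in
theorem stmt7 {X : Type*} [NormedAddCommGroup X] [NormedSpace ℝ X] [CompleteSpace X]
    (hX : ¬ FiniteDimensional ℝ X) (A B : ℕ → Set X) (KA KB : ℕ → ℕ)
    (hA : IsApproximationScheme A KA) (hB : IsApproximationScheme B KB)
    (hS : SatisfiesShapiro A)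
    (hliminf : Filter.liminf
      (fun n => setApproxError {b : X | b ∈ B n ∧ ‖b‖ = 1} (A n)) atTop < 1) :
    SatisfiesShapiro B := by
  classical
  intro ε hεpos hεanti hεlim
  by_contra hcon
  push_neg at hcon
  -- hcon : ∀ x, ∃ M, ∀ n, infDist x (B n) ≤ M * ε n
  -- monotonicity of the schemes
  have hAmono : Monotone A := monotone_nat_of_le_succ hA.subset_succ
  have hBmono : Monotone B := monotone_nat_of_le_succ hB.subset_succ
  -- nonemptiness and zero membership for levels ≥ 1
  have hA1ne : (A 1).Nonempty := by
    obtain ⟨a, ha1, -⟩ := Set.exists_of_ssubset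
      (HasSubset.Subset.ssubset_of_ne (hA.subset_succ 0) (hA.ne_succ 0))
    exact ⟨a, ha1⟩
  have hB1ne : (B 1).Nonempty := by
    obtain ⟨b, hb1, -⟩ := Set.exists_of_ssubset
      (HasSubset.Subset.ssubset_of_ne (hB.subset_succ 0) (hB.ne_succ 0))
    exact ⟨b, hb1⟩
  have hA0mem : ∀ n, 1 ≤ n → (0 : X) ∈ A n := fun n hn => by
    obtain ⟨a, ha⟩ := hA1ne
    simpa using hA.smul_mem n 0 a (hAmono hn ha)
  have hB0mem : ∀ n, 1 ≤ n → (0 : X) ∈ B n := fun n hn => by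
    obtain ⟨b, hb⟩ := hB1ne
    simpa using hB.smul_mem n 0 b (hBmono hn hb)
  have hAne : ∀ n, 1 ≤ n → (A n).Nonempty := fun n hn => ⟨0, hA0mem n hn⟩
  have hBne : ∀ n, 1 ≤ n → (B n).Nonempty := fun n hn => ⟨0, hB0mem n hn⟩
  have hAle : ∀ n (x : X), infDist x (A n) ≤ ‖x‖ := fun n x =>
    infDist_le_norm_of_smulClosed (hA.smul_mem n) x
  -- the frequent levels with good sphere approximation
  set f : ℕ → ℝ := fun n => setApproxError {b : X | b ∈ B n ∧ ‖b‖ = 1} (A n) with hf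
  have hfle1 : ∀ n, f n ≤ 1 := by
    intro n
    apply Real.iSup_le _ zero_le_one
    rintro ⟨b, hb, h1⟩
    simpa [h1] using hAle n b
  set r : ℝ := (max (liminf f atTop) 0 + 1) / 2 with hr
  have hLr : liminf f atTop < r := by
    have h1 : liminf f atTop ≤ max (liminf f atTop) 0 := le_max_left _ _
    have h2 : max (liminf f atTop) 0 < 1 := max_lt hliminf one_pos
    rw [hr]; linarith
  have hr1 : r < 1 := by
    have h2 : max (liminf f atTop) 0 < 1 := max_lt hliminf one_pos
    rw [hr]; linarith
  have hr0 : 0 < r := by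
    have : (0:ℝ) ≤ max (liminf f atTop) 0 := le_max_right _ _
    rw [hr]; linarith
  have hfreq : ∃ᶠ n in atTop, f n < r :=
    frequently_lt_of_liminf_lt
      (isCoboundedUnder_ge_of_eventually_le atTop (Eventually.of_forall hfle1)) hLr
  have hfreq' : ∀ N : ℕ, ∃ p, N ≤ p ∧ f p < r := by
    intro N
    obtain ⟨p, hp1, hp2⟩ := (frequently_atTop.mp hfreq) N
    exact ⟨p, hp1, hp2⟩
  -- pointwise consequence of f p < r
  have hpt : ∀ p, f p < r → ∀ b ∈ B p, ‖b‖ = 1 → infDist b (A p) < r := by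
    intro p hp b hb h1
    refine lt_of_le_of_lt ?_ hp
    have hbdd : BddAbove (Set.range fun b : {b : X | b ∈ B p ∧ ‖b‖ = 1} =>
        infDist (b : X) (A p)) := by
      refine ⟨1, ?_⟩
      rintro x ⟨⟨c, hc, hc1⟩, rfl⟩
      simpa [hc1] using hAle p c
    exact le_ciSup hbdd (⟨b, hb, h1⟩ : {b : X | b ∈ B p ∧ ‖b‖ = 1})
  -- Baire category argument
  have hclosed : ∀ M : ℕ, IsClosed {x : X | ∀ n, infDist x (B n) ≤ M * ε n} := by
    intro M
    have : {x : X | ∀ n, infDist x (B n) ≤ M * ε n}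
        = ⋂ n, {x : X | infDist x (B n) ≤ M * ε n} := by
      ext x; simp
    rw [this]
    exact isClosed_iInter fun n =>
      isClosed_le (continuous_infDist_pt (B n)) continuous_const
  have hcover : (⋃ M : ℕ, {x : X | ∀ n, infDist x (B n) ≤ M * ε n}) = Set.univ := by
    ext x
    simp only [Set.mem_iUnion, Set.mem_setOf_eq, Set.mem_univ, iff_true]
    obtain ⟨M, hM⟩ := hcon x
    refine ⟨⌈M⌉₊, fun n => le_trans (hM n) ?_⟩
    exact mul_le_mul_of_nonneg_right (Nat.le_ceil M) (hεpos n).le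
  obtain ⟨M₀, hM₀⟩ := nonempty_interior_of_iUnion_of_closed hclosed hcover
  obtain ⟨x₀, hx₀⟩ := hM₀
  obtain ⟨ρ, hρ0, hball⟩ := Metric.isOpen_iff.mp isOpen_interior x₀ hx₀
  have hFball : ∀ z ∈ Metric.ball x₀ ρ, ∀ n, infDist z (B n) ≤ M₀ * ε n := by
    intro z hz n
    exact (interior_subset (hball hz)) n
  set C₀ : ℝ := 4 * (M₀ : ℝ) / ρ with hC₀
  have hC₀0 : 0 ≤ C₀ := by positivity
  -- uniform homogeneous bound
  have hunif : ∀ n, 1 ≤ n → ∀ y : X, infDist y (B (KB n)) ≤ C₀ * ε n * ‖y‖ := by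
    intro n hn y
    have hKBn : 1 ≤ KB n := le_trans hn (hB.le_K n)
    rcases eq_or_ne y 0 with rfl | hy
    · simp [infDist_zero_of_mem (hB0mem _ hKBn)]
    · have hny : 0 < ‖y‖ := norm_pos_iff.mpr hy
      have hsub : ∀ z : X, ‖z‖ < ρ → infDist z (B (KB n)) ≤ 2 * M₀ * ε n := by
        intro z hzρ
        refine le_of_forall_pos_le_add fun η hη => ?_
        have hz1 : x₀ + z ∈ Metric.ball x₀ ρ := by
          simpa [Metric.mem_ball, dist_eq_norm] using hzρ
        have hi1 : infDist (x₀ + z) (B n) < M₀ * ε n + η / 2 :=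
          lt_of_le_of_lt (hFball _ hz1 n) (lt_add_of_pos_right _ (by linarith))
        have hi2 : infDist x₀ (B n) < M₀ * ε n + η / 2 :=
          lt_of_le_of_lt (hFball _ (Metric.mem_ball_self hρ0) n)
            (lt_add_of_pos_right _ (by linarith))
        obtain ⟨b1, hb1, hd1⟩ := (infDist_lt_iff (hBne n hn)).mp hi1
        obtain ⟨b2, hb2, hd2⟩ := (infDist_lt_iff (hBne n hn)).mp hi2
        have hmem : b1 - b2 ∈ B (KB n) := by
          have := hB.add_mem n b1 hb1 ((-1 : ℝ) • b2) (hB.smul_mem n (-1) b2 hb2)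
          simpa [sub_eq_add_neg] using this
        have hdd : dist z (b1 - b2) ≤ dist (x₀ + z) b1 + dist x₀ b2 := by
          rw [dist_eq_norm, dist_eq_norm, dist_eq_norm]
          have he : z - (b1 - b2) = (x₀ + z - b1) - (x₀ - b2) := by abel
          rw [he]
          exact norm_sub_le _ _
        have := infDist_le_dist_of_mem hmem (x := z)
        linarith
      set c : ℝ := ρ / (2 * ‖y‖) with hc
      have hc0 : 0 < c := by positivity
      have hzn : ‖c • y‖ < ρ := by
        rw [norm_smul, Real.norm_eq_abs, abs_of_pos hc0, hc]
        rw [div_mul_eq_mul_div, div_lt_iff₀ (by positivity)]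
        nlinarith
      have h1 : infDist (c • y) (B (KB n)) ≤ 2 * M₀ * ε n := hsub _ hzn
      have h2 : infDist y (B (KB n)) ≤ |c⁻¹| * infDist (c • y) (B (KB n)) := by
        have := infDist_smul_le_of_smulClosed (hB.smul_mem (KB n)) c⁻¹ (c • y)
        rwa [inv_smul_smul₀ (ne_of_gt hc0)] at this
      have hcinv : |c⁻¹| = 2 * ‖y‖ / ρ := by
        rw [abs_of_pos (by positivity), hc]
        field_simp
      rw [hcinv] at h2
      have h3 : 2 * ‖y‖ / ρ * infDist (c • y) (B (KB n))
          ≤ 2 * ‖y‖ / ρ * (2 * M₀ * ε n) :=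
        mul_le_mul_of_nonneg_left h1 (by positivity)
      have h4 : 2 * ‖y‖ / ρ * (2 * M₀ * ε n) = C₀ * ε n * ‖y‖ := by
        rw [hC₀]; field_simp; ring
      linarith
  -- choose the reference level n⋆
  have hδ : (0:ℝ) < (1 - r) / 8 := by linarith
  obtain ⟨nstar, hnstar1, hnstar⟩ : ∃ n, 1 ≤ n ∧ C₀ * ε n ≤ (1 - r) / 8 := by
    have hlim2 : Tendsto (fun n => C₀ * ε n) atTop (nhds 0) := by
      simpa using hεlim.const_mul C₀
    have := (hlim2.eventually (gt_mem_nhds hδ)).and (eventually_ge_atTop 1)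
    obtain ⟨n, hn1, hn2⟩ := this.exists
    exact ⟨n, hn2, hn1.le⟩
  set δ : ℝ := (1 - r) / 8 with hδdef
  set θ : ℝ := (1 + r) / 2 with hθdef
  have hθ0 : 0 < θ := by rw [hθdef]; linarith
  have hθ1 : θ < 1 := by rw [hθdef]; linarith
  -- the key contraction step at good levels
  have hkey : ∀ p, max 1 (KB nstar) ≤ p → f p < r →
      ∀ u : X, ∃ a ∈ A p, ‖u - a‖ ≤ θ * ‖u‖ := by
    intro p hp hfp u
    have hp1 : 1 ≤ p := le_trans (le_max_left _ _) hp
    have hpK : KB nstar ≤ p := le_trans (le_max_right _ _) hp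
    rcases eq_or_ne u 0 with rfl | hu
    · exact ⟨0, hA0mem p hp1, by simp⟩
    have hnu : 0 < ‖u‖ := norm_pos_iff.mpr hu
    have hiu : infDist u (B (KB nstar)) ≤ δ * ‖u‖ := by
      calc infDist u (B (KB nstar)) ≤ C₀ * ε nstar * ‖u‖ := hunif nstar hnstar1 u
        _ ≤ δ * ‖u‖ := mul_le_mul_of_nonneg_right hnstar hnu.le
    obtain ⟨b, hbmem, hbd⟩ := (infDist_lt_iff (hBne _ (le_trans hnstar1 (hB.le_K nstar)))).mp
      (lt_of_le_of_lt hiu (lt_add_of_pos_right _ (by positivity : (0:ℝ) < δ * ‖u‖)))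
    have hbd2 : dist u b ≤ 2 * δ * ‖u‖ := by linarith
    have hbp : b ∈ B p := hBmono hpK hbmem
    rcases eq_or_ne b 0 with rfl | hb0
    · refine ⟨0, hA0mem p hp1, ?_⟩
      have : ‖u‖ = dist u 0 := by simp [dist_eq_norm]
      have h2δθ : 2 * δ ≤ θ := by rw [hδdef, hθdef]; linarith
      calc ‖u - 0‖ = dist u 0 := by simp [dist_eq_norm]
        _ ≤ 2 * δ * ‖u‖ := hbd2
        _ ≤ θ * ‖u‖ := mul_le_mul_of_nonneg_right h2δθ hnu.le
    · have hnb : 0 < ‖b‖ := norm_pos_iff.mpr hb0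
      have hb' : ‖b‖⁻¹ • b ∈ B p := hB.smul_mem p ‖b‖⁻¹ b hbp
      have hb'1 : ‖(‖b‖⁻¹ • b)‖ = 1 := by
        rw [norm_smul, Real.norm_eq_abs, abs_of_pos (by positivity)]
        field_simp
      have hinf : infDist (‖b‖⁻¹ • b) (A p) < r := hpt p hfp _ hb' hb'1
      obtain ⟨a', ha', hda'⟩ := (infDist_lt_iff (hAne p hp1)).mp hinf
      refine ⟨‖b‖ • a', hA.smul_mem p ‖b‖ a' ha', ?_⟩
      have hba : ‖b - ‖b‖ • a'‖ ≤ r * ‖b‖ := by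
        have : b - ‖b‖ • a' = ‖b‖ • (‖b‖⁻¹ • b - a') := by
          rw [smul_sub, smul_inv_smul₀ (ne_of_gt hnb)]
        rw [this, norm_smul, Real.norm_eq_abs, abs_of_pos hnb]
        rw [mul_comm]
        refine mul_le_mul_of_nonneg_right ?_ hnb.le
        rw [← dist_eq_norm]; exact hda'.le
      have hbn : ‖b‖ ≤ ‖u‖ + 2 * δ * ‖u‖ := by
        have : ‖b‖ ≤ ‖u‖ + dist u b := by
          rw [dist_eq_norm]
          have := norm_sub_norm_le u b
          have h2 := norm_sub_norm_le b u
          rw [norm_sub_rev] at h2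
          linarith
        linarith
      have hδ0 : (0:ℝ) ≤ δ := by rw [hδdef]; linarith
      have hfinal : 2 * δ + r * (1 + 2 * δ) ≤ θ := by
        rw [hδdef, hθdef]; nlinarith
      have htri : ‖u - ‖b‖ • a'‖ ≤ dist u b + ‖b - ‖b‖ • a'‖ := by
        rw [dist_eq_norm]
        have he : u - ‖b‖ • a' = (u - b) + (b - ‖b‖ • a') := by abel
        rw [he]; exact norm_add_le _ _
      have hrb : r * ‖b‖ ≤ r * (‖u‖ + 2 * δ * ‖u‖) := mul_le_mul_of_nonneg_left hbn hr0.le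
      nlinarith [hnu.le, hδ0, hfinal]
  -- choose frequent levels above any bound
  have hex : ∀ N : ℕ, ∃ p, max N (max 1 (KB nstar)) ≤ p ∧ f p < r := fun N => by
    obtain ⟨p, hp1, hp2⟩ := hfreq' (max N (max 1 (KB nstar)))
    exact ⟨p, hp1, hp2⟩
  let g : ℕ → ℕ := fun N => (hex N).choose
  have hg : ∀ N, max N (max 1 (KB nstar)) ≤ g N ∧ f (g N) < r := fun N => (hex N).choose_spec
  -- the level sequence Q
  obtain ⟨Q, hQ0, hQsucc⟩ : ∃ Q : ℕ → ℕ, Q 0 = 1 ∧ ∀ k, Q (k + 1) = KA (g (Q k + 1)) :=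
    ⟨fun k => Nat.rec 1 (fun _ qk => KA (g (qk + 1))) k, rfl, fun k => rfl⟩
  have hQlt : ∀ k, Q k < Q (k + 1) := by
    intro k
    have h1 : Q k + 1 ≤ g (Q k + 1) := le_trans (le_max_left _ _) (hg (Q k + 1)).1
    have h2 : g (Q k + 1) ≤ KA (g (Q k + 1)) := hA.le_K _
    rw [hQsucc]; omega
  have hQmono : Monotone Q := monotone_nat_of_le_succ fun k => (hQlt k).le
  have hQgt : ∀ k, k < Q k := by
    intro k
    induction k with
    | zero => rw [hQ0]; exact Nat.one_pos
    | succ n ih => exact lt_of_le_of_lt (Nat.succ_le_of_lt ih) (hQlt n)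
  -- the uniform geometric approximation property
  have hP : ∀ k, ∀ x : X, ∃ a ∈ A (Q k), ‖x - a‖ ≤ θ ^ k * ‖x‖ := by
    intro k
    induction k with
    | zero =>
      intro x
      refine ⟨0, by rw [hQ0]; exact hA0mem 1 le_rfl, by simp⟩
    | succ k ih =>
      intro x
      obtain ⟨a, haQ, hae⟩ := ih x
      set p := g (Q k + 1) with hpdef
      have hp1 : max 1 (KB nstar) ≤ p := le_trans (le_max_right _ _) (hg (Q k + 1)).1
      have hpf : f p < r := (hg (Q k + 1)).2
      have hQkp : Q k ≤ p := le_trans (Nat.le_succ _) (le_trans (le_max_left _ _) (hg (Q k + 1)).1)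
      obtain ⟨a', ha'p, ha'e⟩ := hkey p hp1 hpf (x - a)
      refine ⟨a + a', ?_, ?_⟩
      · have hap : a ∈ A p := hAmono hQkp haQ
        rw [hQsucc]
        exact hA.add_mem p a hap a' ha'p
      · have he : x - (a + a') = (x - a) - a' := by abel
        rw [he]
        calc ‖(x - a) - a'‖ ≤ θ * ‖x - a‖ := ha'e
          _ ≤ θ * (θ ^ k * ‖x‖) := mul_le_mul_of_nonneg_left hae hθ0.le
          _ = θ ^ (k + 1) * ‖x‖ := by ring
  -- the step sequence ε'
  let m : ℕ → ℕ := fun n => Nat.findGreatest (fun k => Q k ≤ n) n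
  let ε' : ℕ → ℝ := fun n => θ ^ m n
  have hQm : ∀ n, 0 < m n → Q (m n) ≤ n := by
    intro n hpos
    obtain ⟨j, hj0, hjn, hjP⟩ := Nat.findGreatest_pos.mp hpos
    exact Nat.findGreatest_spec (P := fun k => Q k ≤ n) hjn hjP
  have hmmono : Monotone m := by
    intro n n' hnn'
    rcases Nat.eq_zero_or_pos (m n) with h0 | hpos
    · rw [h0]; exact Nat.zero_le _
    · refine Nat.le_findGreatest (le_trans (Nat.findGreatest_le n) hnn') ?_
      exact le_trans (hQm n hpos) hnn'
  have hmto : Tendsto m atTop atTop := by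
    refine tendsto_atTop_atTop.2 fun k => ⟨Q k, fun n hn => ?_⟩
    exact Nat.le_findGreatest (le_trans (hQgt k).le hn) hn
  have hε'pos : ∀ n, 0 < ε' n := fun n => pow_pos hθ0 _
  have hε'anti : Antitone ε' := fun n n' h =>
    pow_le_pow_of_le_one hθ0.le hθ1.le (hmmono h)
  have hε'lim : Tendsto ε' atTop (nhds 0) :=
    (tendsto_pow_atTop_nhds_zero_of_lt_one hθ0.le hθ1).comp hmto
  obtain ⟨x, hx⟩ := hS ε' hε'pos hε'anti hε'lim
  apply hx
  refine ⟨‖x‖, fun n => ?_⟩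
  rcases Nat.eq_zero_or_pos (m n) with h0 | hpos
  · have h1 : ε' n = 1 := by simp only [ε', h0, pow_zero]
    rw [h1, mul_one]
    exact hAle n x
  · obtain ⟨a, hamem, hae⟩ := hP (m n) x
    have hQn : Q (m n) ≤ n := hQm n hpos
    have h2 : infDist x (A n) ≤ dist x a := infDist_le_dist_of_mem (hAmono hQn hamem)
    rw [dist_eq_norm] at h2
    calc infDist x (A n) ≤ θ ^ m n * ‖x‖ := le_trans h2 hae
      _ = ‖x‖ * ε' n := mul_comm _ _
end

section
/- Let X be an infinite-dimensional real Banach space. Assume that for each r ∈ ℕ the family (A_{n,r})_{n≥0} is an approximation scheme in X satisfying Shapiro's Theorem, and that n₁ ≤ n₂ and r₁ ≤ r₂ imply A_{n₁,r₁} ⊆ A_{n₂,r₂}. Then for every pair of increasing sequences (n_i) → ∞ and (r_i) → ∞ of natural numbers such that the family B_i = A_{n_i,r_i} (i ≥ 0) is an approximation scheme in X, the scheme (X,(B_i)) satisfies Shapiro's Theorem. -/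
open Metric Filter

/-!
If `E(x, B_i) = O(ε_i)` for every `x`, Baire's theorem makes the constant uniform on a ball, and
differences of points of that ball show that a single `B_m = A_{n,r}` approximates every `x` to
within `‖x‖ / 2`. Since `A_{n,r} + A_{n,r} ⊆ A_{K(n),r}`, this relative approximation can be
iterated: `E(x, A_{K^[j] n, r}) ≤ 2⁻ʲ E(x, A_{n,r})`. Hence every error `E(x, A_{k,r})` is
`O(2^{-g(k)})` for one nondecreasing `g → ∞`, contradicting Shapiro's theorem for the `r`-th scheme.
-/

open Topology Asymptotics Pointwise

lemma exists_monotone_tendsto_atTop_forall_apply_le (f : ℕ → ℕ) :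
    ∃ g : ℕ → ℕ, Monotone g ∧ Tendsto g atTop atTop ∧ ∀ n, f 0 ≤ n → f (g n) ≤ n :=
  ⟨fun n => Nat.findGreatest (fun j => f j ≤ n) n,
    fun _ _ h => Nat.findGreatest_mono (fun _ hj => le_trans hj h) h,
    tendsto_atTop_atTop.2 fun j => ⟨max j (f j), fun _ hn =>
      Nat.le_findGreatest (le_of_max_le_left hn) (le_of_max_le_right hn)⟩,
    fun n hn => Nat.findGreatest_spec (P := fun j => f j ≤ n) (Nat.zero_le n) hn⟩

lemma not_satisfiesShapiro_of_isBigO {X : Type*} [NormedAddCommGroup X] {A : ℕ → Set X}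
    {ε : ℕ → ℝ} (hpos : ∀ n, 0 < ε n) (hanti : Antitone ε) (hlim : Tendsto ε atTop (𝓝 0))
    (h : ∀ x, (fun n => infDist x (A n)) =O[atTop] ε) : ¬ SatisfiesShapiro A := by
  intro hA
  obtain ⟨x, hx⟩ := hA ε hpos hanti hlim
  obtain ⟨M, hM⟩ := (isBigO_nat_atTop_iff fun n h => absurd h (hpos n).ne').1 (h x)
  refine hx ⟨M, fun n => ?_⟩
  simpa only [Real.norm_of_nonneg infDist_nonneg, Real.norm_of_nonneg (hpos n).le] using hM n

lemma exists_ball_forall_le_mul {X ι : Type*} [PseudoMetricSpace X] [BaireSpace X] [Nonempty X]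
    {f : ι → X → ℝ} (hf : ∀ i, Continuous (f i)) {ε : ι → ℝ} (hε : ∀ i, 0 ≤ ε i)
    (h : ∀ x, ∃ M : ℝ, ∀ i, f i x ≤ M * ε i) :
    ∃ x₀, ∃ δ > 0, ∃ M : ℝ, ∀ y ∈ ball x₀ δ, ∀ i, f i y ≤ M * ε i := by
  let S : ℕ → Set X := fun M => {x | ∀ i, f i x ≤ M * ε i}
  have hclosed (M : ℕ) : IsClosed (S M) := by
    simp only [S, Set.ofPred_forall]
    exact isClosed_iInter fun i => isClosed_le (hf i) continuous_const
  have hcover : ⋃ M, S M = Set.univ := Set.eq_univ_of_forall fun x => by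
    obtain ⟨M, hM⟩ := h x
    exact Set.mem_iUnion.2
      ⟨⌈M⌉₊, fun i => (hM i).trans (mul_le_mul_of_nonneg_right (Nat.le_ceil M) (hε i))⟩
  obtain ⟨M, x₀, hx₀⟩ := nonempty_interior_of_iUnion_of_closed hclosed hcover
  obtain ⟨δ, hδ, hball⟩ := Metric.mem_nhds_iff.1 (mem_interior_iff_mem_nhds.1 hx₀)
  exact ⟨x₀, δ, hδ, M, hball⟩

namespace IsApproximationScheme

variable {X : Type*} [NormedAddCommGroup X] [NormedSpace ℝ X] {A : ℕ → Set X} {K : ℕ → ℕ}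

theorem monotone (hA : IsApproximationScheme A K) : Monotone A :=
  monotone_nat_of_le_succ hA.subset_succ

theorem le_iterate (hA : IsApproximationScheme A K) (m j : ℕ) : m ≤ K^[j] m :=
  Function.id_le_iterate_of_id_le hA.le_K j m

theorem nonempty (hA : IsApproximationScheme A K) {n : ℕ} (hn : n ≠ 0) : (A n).Nonempty := by
  obtain ⟨k, rfl⟩ := Nat.exists_eq_succ_of_ne_zero hn
  rw [Set.nonempty_iff_ne_empty]
  intro h
  exact hA.ne_succ k (by rw [h, ← Set.subset_empty_iff, ← h]; exact hA.subset_succ k)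

theorem zero_mem_of_nonempty (hA : IsApproximationScheme A K) {n : ℕ} (hne : (A n).Nonempty) :
    (0 : X) ∈ A n := by
  obtain ⟨a, ha⟩ := hne
  simpa using hA.smul_mem n 0 a ha

theorem infDist_smul (hA : IsApproximationScheme A K) (n : ℕ) {t : ℝ} (ht : t ≠ 0) (x : X) :
    infDist (t • x) (A n) = |t| * infDist x (A n) := by
  have hcone : t • A n = A n := by
    ext y
    rw [Set.mem_smul_set_iff_inv_smul_mem₀ ht]
    refine ⟨fun hy => ?_, hA.smul_mem n _ y⟩
    simpa [smul_smul, ht] using hA.smul_mem n t _ hy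
  rw [← Real.norm_eq_abs, ← infDist_smul₀ ht, hcone]

theorem infDist_K_le_infDist_sub (hA : IsApproximationScheme A K) {n : ℕ} {a : X}
    (ha : a ∈ A n) (x : X) : infDist x (A (K n)) ≤ infDist (x - a) (A n) :=
  (le_infDist ⟨a, ha⟩).2 fun b hb => by
    simpa only [dist_eq_norm, sub_sub] using
      infDist_le_dist_of_mem (x := x) (hA.add_mem n a ha b hb)

theorem infDist_sub_le (hA : IsApproximationScheme A K) {n : ℕ} (hne : (A n).Nonempty)
    (y z : X) : infDist (y - z) (A (K n)) ≤ infDist y (A n) + infDist z (A n) := by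
  rw [← sub_le_iff_le_add', le_infDist hne]
  intro b hb
  rw [sub_le_iff_le_add']
  calc infDist (y - z) (A (K n))
      ≤ infDist (y - z - (-1 : ℝ) • b) (A n) :=
        hA.infDist_K_le_infDist_sub (hA.smul_mem n (-1) b hb) _
    _ ≤ infDist y (A n) + dist (y - z - (-1 : ℝ) • b) y := infDist_le_infDist_add_dist
    _ = infDist y (A n) + dist z b := by
        rw [dist_eq_norm, dist_eq_norm, ← norm_neg]
        congr 2
        module

theorem infDist_K_le_mul (hA : IsApproximationScheme A K) {m n : ℕ} {c : ℝ} (hc : 0 ≤ c)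
    (hmn : m ≤ n) (hm : (A m).Nonempty) (h : ∀ y, infDist y (A m) ≤ c * ‖y‖) (x : X) :
    infDist x (A (K n)) ≤ c * infDist x (A n) := by
  have : Nonempty (A n) := (hm.mono (hA.monotone hmn)).to_subtype
  rw [infDist_eq_iInf (s := A n), Real.mul_iInf_of_nonneg hc]
  refine le_ciInf fun ⟨a, ha⟩ => ?_
  calc infDist x (A (K n)) ≤ infDist (x - a) (A n) := hA.infDist_K_le_infDist_sub ha x
    _ ≤ infDist (x - a) (A m) := infDist_le_infDist_of_subset (hA.monotone hmn) hm
    _ ≤ c * dist x a := by rw [dist_eq_norm]; exact h _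

theorem infDist_iterate_le (hA : IsApproximationScheme A K) {m : ℕ} {c : ℝ} (hc : 0 ≤ c)
    (hm : (A m).Nonempty) (h : ∀ y, infDist y (A m) ≤ c * ‖y‖) (x : X) (j : ℕ) :
    infDist x (A (K^[j] m)) ≤ c ^ j * infDist x (A m) := by
  induction j with
  | zero => simp
  | succ j ih =>
    rw [Function.iterate_succ_apply', pow_succ', mul_assoc]
    exact (hA.infDist_K_le_mul hc (hA.le_iterate m j) hm h x).trans
      (mul_le_mul_of_nonneg_left ih hc)

theorem not_satisfiesShapiro (hA : IsApproximationScheme A K) {m : ℕ} {c : ℝ} (hc0 : 0 < c)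
    (hc1 : c < 1) (hm : (A m).Nonempty) (h : ∀ y, infDist y (A m) ≤ c * ‖y‖) :
    ¬ SatisfiesShapiro A := by
  obtain ⟨g, hg_mono, hg_lim, hg⟩ :=
    exists_monotone_tendsto_atTop_forall_apply_le fun j => K^[j] m
  refine not_satisfiesShapiro_of_isBigO (ε := fun n => c ^ g n) (fun n => pow_pos hc0 _)
    (fun _ _ hnn' => pow_le_pow_of_le_one hc0.le hc1.le (hg_mono hnn'))
    ((tendsto_pow_atTop_nhds_zero_of_lt_one hc0.le hc1).comp hg_lim) fun x => ?_
  refine IsBigO.of_bound (infDist x (A m)) ?_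
  filter_upwards [eventually_ge_atTop m] with n hn
  have hne : (A (K^[g n] m)).Nonempty := hm.mono (hA.monotone (hA.le_iterate m _))
  calc ‖infDist x (A n)‖ = infDist x (A n) := Real.norm_of_nonneg infDist_nonneg
    _ ≤ infDist x (A (K^[g n] m)) := infDist_le_infDist_of_subset (hA.monotone (hg n hn)) hne
    _ ≤ c ^ g n * infDist x (A m) := hA.infDist_iterate_le hc0.le hm h x (g n)
    _ = infDist x (A m) * ‖c ^ g n‖ := by
        rw [mul_comm, Real.norm_of_nonneg (pow_pos hc0 _).le]

theorem mul_infDist_K_le_of_forall_mem_ball (hA : IsApproximationScheme A K) {x₀ : X}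
    {δ r : ℝ} (hδ : 0 < δ) {n : ℕ} (hne : (A n).Nonempty)
    (hball : ∀ y ∈ ball x₀ δ, infDist y (A n) ≤ r) (x : X) :
    δ * infDist x (A (K n)) ≤ 4 * r * ‖x‖ := by
  rcases eq_or_ne x 0 with rfl | hx
  · simp [infDist_zero_of_mem (hA.monotone (hA.le_K n) (hA.zero_mem_of_nonempty hne))]
  set t := δ / (2 * ‖x‖) with ht_def
  have ht : 0 < t := by positivity
  have hy : x₀ + t • x ∈ ball x₀ δ := by
    rw [mem_ball, dist_eq_norm, add_sub_cancel_left, norm_smul, Real.norm_of_nonneg ht.le,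
      ht_def, div_mul_eq_mul_div, mul_div_mul_right _ _ (norm_ne_zero_iff.2 hx)]
    linarith
  have hdist : t * infDist x (A (K n)) ≤ r + r :=
    calc t * infDist x (A (K n)) = infDist (x₀ + t • x - x₀) (A (K n)) := by
          rw [add_sub_cancel_left, hA.infDist_smul _ ht.ne', abs_of_pos ht]
      _ ≤ infDist (x₀ + t • x) (A n) + infDist x₀ (A n) := hA.infDist_sub_le hne _ _
      _ ≤ r + r := add_le_add (hball _ hy) (hball _ (mem_ball_self hδ))
  calc δ * infDist x (A (K n)) = 2 * ‖x‖ * (t * infDist x (A (K n))) := by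
        rw [ht_def]; field_simp
    _ ≤ 2 * ‖x‖ * (r + r) := by gcongr
    _ = 4 * r * ‖x‖ := by ring

theorem exists_infDist_le_mul_norm [CompleteSpace X] (hA : IsApproximationScheme A K)
    {ε : ℕ → ℝ} (hε : ∀ n, 0 ≤ ε n) (hlim : Tendsto ε atTop (𝓝 0))
    (h : ∀ x, ∃ M : ℝ, ∀ n, infDist x (A n) ≤ M * ε n) {c : ℝ} (hc : 0 < c) :
    ∃ m, (A m).Nonempty ∧ ∀ x, infDist x (A m) ≤ c * ‖x‖ := by
  obtain ⟨x₀, δ, hδ, M, hball⟩ :=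
    exists_ball_forall_le_mul (fun n => continuous_infDist_pt (A n)) hε h
  have hsmall : ∀ᶠ n in atTop, 4 * M * ε n ≤ c * δ :=
    (hlim.const_mul (4 * M)).eventually (Iic_mem_nhds (by rw [mul_zero]; positivity))
  obtain ⟨n, hn, hsmall_n⟩ := ((eventually_ge_atTop 1).and hsmall).exists
  have hne : (A n).Nonempty := hA.nonempty (by omega)
  refine ⟨K n, hne.mono (hA.monotone (hA.le_K n)), fun x => le_of_mul_le_mul_left ?_ hδ⟩
  calc δ * infDist x (A (K n)) ≤ 4 * (M * ε n) * ‖x‖ :=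
        hA.mul_infDist_K_le_of_forall_mem_ball hδ hne (fun y hy => hball y hy n) x
    _ ≤ c * δ * ‖x‖ := by rw [← mul_assoc]; gcongr
    _ = δ * (c * ‖x‖) := by ring

end IsApproximationScheme

theorem stmt8_general {X : Type*} [NormedAddCommGroup X] [NormedSpace ℝ X] [CompleteSpace X]
    (A : ℕ → ℕ → Set X)
    (hscheme : ∀ r : ℕ, ∃ K : ℕ → ℕ, IsApproximationScheme (fun n => A n r) K)
    (hshapiro : ∀ r : ℕ, SatisfiesShapiro (fun n => A n r))
    (ni ri : ℕ → ℕ)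
    (hBscheme : ∃ K : ℕ → ℕ, IsApproximationScheme (fun i => A (ni i) (ri i)) K) :
    SatisfiesShapiro (fun i => A (ni i) (ri i)) := by
  intro ε hpos _ hlim
  by_contra! hbounded
  obtain ⟨KB, hB⟩ := hBscheme
  obtain ⟨i, hne, hi⟩ := hB.exists_infDist_le_mul_norm (fun n => (hpos n).le) hlim hbounded
    (c := 2⁻¹) (by norm_num)
  obtain ⟨K, hA⟩ := hscheme (ri i)
  exact hA.not_satisfiesShapiro (m := ni i) (by norm_num) (by norm_num) hne hi (hshapiro (ri i))

theorem stmt8 {X : Type*} [NormedAddCommGroup X] [NormedSpace ℝ X] [CompleteSpace X]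
    (hX : ¬ FiniteDimensional ℝ X) (A : ℕ → ℕ → Set X)
    (hscheme : ∀ r : ℕ, ∃ K : ℕ → ℕ, IsApproximationScheme (fun n => A n r) K)
    (hshapiro : ∀ r : ℕ, SatisfiesShapiro (fun n => A n r))
    (hmono : ∀ n₁ n₂ r₁ r₂ : ℕ, n₁ ≤ n₂ → r₁ ≤ r₂ → A n₁ r₁ ⊆ A n₂ r₂)
    (ni ri : ℕ → ℕ) (hni : Monotone ni) (hri : Monotone ri)
    (hnit : Tendsto ni atTop atTop) (hrit : Tendsto ri atTop atTop)
    (hBscheme : ∃ K : ℕ → ℕ, IsApproximationScheme (fun i => A (ni i) (ri i)) K) :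
    SatisfiesShapiro (fun i => A (ni i) (ri i)) :=
  stmt8_general A hscheme hshapiro ni ri hBscheme
end

section
/- Let X be a real Banach space and let D be a Hamel basis of X, i.e. an algebraic (linearly independent, spanning) basis of X as a real vector space. For n ≥ 1 let Σ_n(D) = ⋃ { span(F) : F ⊆ D, |F| ≤ n }. Then there exists n ∈ ℕ such that Σ_n(D) is dense in X. -/
open Metric

theorem stmt11 {X : Type*} [NormedAddCommGroup X] [NormedSpace ℝ X] [CompleteSpace X]
    (D : Set X) (hind : LinearIndependent ℝ ((↑) : D → X))
    (hspan : Submodule.span ℝ D = ⊤) :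
    ∃ n : ℕ, Dense {x : X | ∃ F : Finset X, ↑F ⊆ D ∧ F.card ≤ n ∧
      x ∈ Submodule.span ℝ (F : Set X)} := by
  set S : ℕ → Set X := fun n => {x : X | ∃ F : Finset X, ↑F ⊆ D ∧ F.card ≤ n ∧
      x ∈ Submodule.span ℝ (F : Set X)} with hSdef
  classical
  have hadd : ∀ {n m : ℕ} {x y : X}, x ∈ S n → y ∈ S m → x + y ∈ S (n + m) := by
    rintro n m x y ⟨F, hF, hFc, hx⟩ ⟨G, hG, hGc, hy⟩
    refine ⟨F ∪ G, ?_, ?_, ?_⟩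
    · push_cast; exact Set.union_subset hF hG
    · exact le_trans (Finset.card_union_le F G) (add_le_add hFc hGc)
    · have h1 : x ∈ Submodule.span ℝ ((F ∪ G : Finset X) : Set X) :=
        Submodule.span_mono (by push_cast; exact Set.subset_union_left) hx
      have h2 : y ∈ Submodule.span ℝ ((F ∪ G : Finset X) : Set X) :=
        Submodule.span_mono (by push_cast; exact Set.subset_union_right) hy
      exact Submodule.add_mem _ h1 h2
  have hsmul : ∀ {n : ℕ} {t : ℝ} {x : X}, x ∈ S n → t • x ∈ S n := by
    rintro n t x ⟨F, hF, hFc, hx⟩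
    exact ⟨F, hF, hFc, Submodule.smul_mem _ t hx⟩
  have hcover : (⋃ n, closure (S n)) = Set.univ := by
    apply Set.eq_univ_of_forall
    intro x
    have hx : x ∈ Submodule.span ℝ D := by rw [hspan]; trivial
    obtain ⟨F, hF, hxF⟩ := Submodule.mem_span_finite_of_mem_span hx
    exact Set.mem_iUnion.2 ⟨F.card, subset_closure ⟨F, hF, le_rfl, hxF⟩⟩
  obtain ⟨n, hn⟩ := nonempty_interior_of_iUnion_of_closed (fun n => isClosed_closure) hcover
  obtain ⟨x₀, hx₀⟩ := hn
  obtain ⟨r, hr, hball⟩ := Metric.isOpen_iff.1 isOpen_interior x₀ hx₀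
  have hball' : ball x₀ r ⊆ closure (S n) := hball.trans interior_subset
  refine ⟨2 * n, ?_⟩
  show Dense (S (2 * n))
  rw [Metric.dense_iff]
  intro y ε hε
  set t : ℝ := r / (‖y‖ + 1) with ht
  have hypos : (0:ℝ) < ‖y‖ + 1 := by positivity
  have htpos : 0 < t := div_pos hr hypos
  have hty : ‖t • y‖ < r := by
    rw [norm_smul, Real.norm_eq_abs, abs_of_pos htpos, ht]
    calc r / (‖y‖ + 1) * ‖y‖ < r / (‖y‖ + 1) * (‖y‖ + 1) := by
          exact mul_lt_mul_of_pos_left (lt_add_one _) htpos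
      _ = r := div_mul_cancel₀ r hypos.ne'
  have hmem1 : x₀ + t • y ∈ closure (S n) := by
    apply hball'
    rw [mem_ball, dist_eq_norm]
    simpa using hty
  have hmem2 : x₀ ∈ closure (S n) := hball' (mem_ball_self hr)
  have hε2 : 0 < t * ε / 2 := by positivity
  obtain ⟨a, ha, hda⟩ := Metric.mem_closure_iff.1 hmem1 _ hε2
  obtain ⟨b, hb, hdb⟩ := Metric.mem_closure_iff.1 hmem2 _ hε2
  refine ⟨t⁻¹ • (a - b), ?_, ?_⟩
  · rw [mem_ball, dist_eq_norm]
    have hne : t ≠ 0 := htpos.ne'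
    have key : y - t⁻¹ • (a - b) = t⁻¹ • ((x₀ + t • y - a) - (x₀ - b)) := by
      simp only [smul_sub, smul_add, inv_smul_smul₀ hne]
      abel
    rw [norm_sub_rev, key, norm_smul, Real.norm_eq_abs, abs_of_pos (inv_pos.2 htpos)]
    have hnorm : ‖(x₀ + t • y - a) - (x₀ - b)‖ < t * ε := by
      calc ‖(x₀ + t • y - a) - (x₀ - b)‖ ≤ ‖x₀ + t • y - a‖ + ‖x₀ - b‖ := norm_sub_le _ _
        _ < t * ε / 2 + t * ε / 2 := by
            rw [dist_eq_norm] at hda hdb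
            exact add_lt_add hda hdb
        _ = t * ε := by ring
    calc t⁻¹ * ‖(x₀ + t • y - a) - (x₀ - b)‖ < t⁻¹ * (t * ε) :=
          mul_lt_mul_of_pos_left hnorm (inv_pos.2 htpos)
      _ = ε := by field_simp
  · have : a - b ∈ S (n + n) := by
      have hb' : (-1 : ℝ) • b ∈ S n := hsmul hb
      have := hadd ha hb'
      simpa [sub_eq_add_neg] using this
    have h2 : t⁻¹ • (a - b) ∈ S (n + n) := hsmul this
    simpa [two_mul] using h2
end

section
/- Let X = ℓ∞ be the real Banach space of bounded real sequences with the supremum norm. Let (ε_n)_{n≥1} be a sequence with 1 ≥ ε_1 ≥ ε_2 ≥ ⋯ ≥ 0 and ε_n → 0. Then there exists an approximation scheme (A_n) in X such that dens_n = E(S(X), A_n) ≤ ε_n for every n ≥ 1, and there exists x ∈ X with ‖x‖ = 1 such that E(x, A_n) ≥ ε_n/(1 + ε_n) (in particular E(x, A_n) ≥ ε_n/2) for every n ≥ 1. -/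
open Metric Filter

/-!
`A n` is the set of sequences with finitely many values, at most `⌈1/ε n⌉` of them, plus the span
of `n` vectors having infinitely many values on pairwise disjoint sets of coordinates; these vectors
make the inclusions strict and do not affect the remaining coordinates. A sum of sequences with
`a` and `b` values has at most `a * b` values, so `A n + A n ⊆ A m` once
`ε m ≤ (ε n / (1 + ε n)) ^ 2`. Rounding each coordinate to
the nearest of the midpoints of `⌈1/ε n⌉` equal subintervals of `[-1, 1]` gives `dens_n ≤ ε n`.
A unit vector that takes, for every `N`, all the values `2b/N - 1` (`b ≤ N`) is at distance at least
`1/N` from every sequence with `N` values (two of the `N + 1` values share an approximant), and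
`1/⌈1/ε⌉ ≥ ε/(1 + ε)`.
-/

open scoped ENNReal Pointwise lp
open Finset

namespace LInftyScheme

noncomputable section

lemma exists_nat_le_le_add_one {s : ℝ} {N : ℕ} (hs₀ : 0 ≤ s) (hsN : s ≤ N) (hN : 1 ≤ N) :
    ∃ m < N, (m : ℝ) ≤ s ∧ s ≤ m + 1 := by
  rcases hsN.lt_or_eq with hlt | rfl
  · exact ⟨⌊s⌋₊, (Nat.floor_lt hs₀).2 hlt, Nat.floor_le hs₀, (Nat.lt_floor_add_one s).le⟩
  · refine ⟨N - 1, by omega, ?_, ?_⟩ <;> rw [Nat.cast_pred hN] <;> linarith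

lemma exists_abs_sub_grid_le {R t : ℝ} (hR : 0 < R) (ht : |t| ≤ R) {N : ℕ} (hN : 1 ≤ N) :
    ∃ m < N, |t - (R * (2 * m + 1) / N - R)| ≤ R / N := by
  have hN' : (0 : ℝ) < N := by exact_mod_cast hN
  obtain ⟨ht₁, ht₂⟩ := abs_le.1 ht
  obtain ⟨m, hmN, hm₁, hm₂⟩ := exists_nat_le_le_add_one (s := (t + R) * N / (2 * R))
    (div_nonneg (mul_nonneg (by linarith) hN'.le) (by positivity))
    (by rw [div_le_iff₀ (by positivity)]; nlinarith) hN
  refine ⟨m, hmN, ?_⟩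
  have hrescale :
      t - (R * (2 * m + 1) / N - R) = 2 * R / N * ((t + R) * N / (2 * R) - m - 1 / 2) := by
    field_simp; ring
  rw [hrescale, abs_mul, abs_of_pos (by positivity)]
  calc 2 * R / N * |(t + R) * N / (2 * R) - m - 1 / 2| ≤ 2 * R / N * (1 / 2) := by
        gcongr; rw [abs_le]; constructor <;> linarith
    _ = R / N := by ring

lemma memℓp_infty_of_forall_mem {f : ℕ → ℝ} (S : Finset ℝ) (hf : ∀ j, f j ∈ S) :
    Memℓp f ∞ :=
  memℓp_infty ((S.image norm).bddAbove.mono (by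
    rintro _ ⟨j, rfl⟩; exact mem_coe.2 (mem_image_of_mem _ (hf j))))

lemma memℓp_infty_of_abs_le_one {f : ℕ → ℝ} (hf : ∀ j, |f j| ≤ 1) : Memℓp f ∞ :=
  memℓp_infty ⟨1, by rintro _ ⟨j, rfl⟩; exact hf j⟩

/-- Sequences with finitely many values, at most `⌈1/ε⌉` of them when `ε > 0`. -/
def fewValued (ε : ℝ) : Set ℓ^∞(ℕ, ℝ) :=
  {y | ∃ S : Finset ℝ, (∀ j, y j ∈ S) ∧ ((#S : ℝ) - 1) * ε < 1}

lemma one_le_card_of_forall_mem {y : ℕ → ℝ} {S : Finset ℝ} (hy : ∀ j, y j ∈ S) :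
    (1 : ℝ) ≤ #S := by
  exact_mod_cast card_pos.2 ⟨_, hy 0⟩

lemma fewValued_anti : Antitone fewValued := by
  rintro ε ε' hε y ⟨S, hyS, hS⟩
  refine ⟨S, hyS, lt_of_le_of_lt ?_ hS⟩
  have := one_le_card_of_forall_mem hyS
  exact mul_le_mul_of_nonneg_left hε (by linarith)

lemma zero_mem_fewValued (ε : ℝ) : (0 : ℓ^∞(ℕ, ℝ)) ∈ fewValued ε :=
  ⟨{0}, fun _ => by simp, by simp⟩

lemma smul_mem_fewValued {ε : ℝ} (hε : 0 ≤ ε) (c : ℝ) {y : ℓ^∞(ℕ, ℝ)}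
    (hy : y ∈ fewValued ε) : c • y ∈ fewValued ε := by
  obtain ⟨S, hyS, hS⟩ := hy
  refine ⟨S.image (c * · : ℝ → ℝ), fun j => mem_image_of_mem _ (hyS j), lt_of_le_of_lt ?_ hS⟩
  exact mul_le_mul_of_nonneg_right (sub_le_sub_right (by exact_mod_cast card_image_le) 1) hε

lemma add_mem_fewValued {ε ε' : ℝ} (hε : 0 ≤ ε) (hε' : 0 ≤ ε') (hεε' : ε' * (1 + ε) ^ 2 ≤ ε ^ 2)
    {y z : ℓ^∞(ℕ, ℝ)} (hy : y ∈ fewValued ε) (hz : z ∈ fewValued ε) : y + z ∈ fewValued ε' := by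
  obtain ⟨S, hyS, hS⟩ := hy
  obtain ⟨T, hzT, hT⟩ := hz
  refine ⟨image₂ (· + ·) S T, fun j => mem_image₂_of_mem (hyS j) (hzT j), ?_⟩
  have hcard : (#(image₂ (· + ·) S T) : ℝ) ≤ #S * #T := by exact_mod_cast card_image₂_le _ _ _
  have hS₁ := one_le_card_of_forall_mem hyS
  have hT₁ := one_le_card_of_forall_mem hzT
  have hST : (#S : ℝ) * #T * ε' < 1 := by
    have h : (#S * ε) * (#T * ε) < (1 + ε) ^ 2 := by
      rw [sq]; exact mul_lt_mul'' (by linarith) (by linarith) (by positivity) (by positivity)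
    refine lt_of_mul_lt_mul_right ?_ (sq_nonneg (1 + ε))
    calc (#S : ℝ) * #T * ε' * (1 + ε) ^ 2 ≤ #S * #T * ε ^ 2 := by
          rw [mul_assoc]; gcongr
      _ < 1 * (1 + ε) ^ 2 := by linarith
  calc ((#(image₂ (· + ·) S T) : ℝ) - 1) * ε' ≤ (#S * #T - 1) * ε' := by gcongr
    _ < 1 := by linarith

lemma infDist_fewValued_le {ε δ R : ℝ} (hε : 0 ≤ ε) (hεδ : ε < δ) (hR : 0 < R)
    {y : ℓ^∞(ℕ, ℝ)} (hy : ‖y‖ ≤ R) : infDist y (fewValued ε) ≤ R * δ := by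
  have hδ : 0 < δ := hε.trans_lt hεδ
  set N := ⌈δ⁻¹⌉₊
  have hN₁ : 1 ≤ N := Nat.one_le_ceil_iff.2 (inv_pos.2 hδ)
  have hN₁' : (1 : ℝ) ≤ N := by exact_mod_cast hN₁
  have hδN : δ⁻¹ ≤ N := Nat.le_ceil _
  have hNδ : (N : ℝ) - 1 < δ⁻¹ := by
    linarith [Nat.ceil_lt_add_one (inv_nonneg.2 hδ.le)]
  have hcoord : ∀ j, |y j| ≤ R := fun j =>
    (lp.norm_apply_le_norm ENNReal.top_ne_zero y j).trans hy
  choose m hmN hm using fun j => exists_abs_sub_grid_le hR (hcoord j) hN₁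
  set grid : ℕ → ℝ := fun k => R * (2 * k + 1) / N - R
  have hmem : ∀ j, grid (m j) ∈ (range N).image grid := fun j =>
    mem_image_of_mem _ (mem_range.2 (hmN j))
  let z : ℓ^∞(ℕ, ℝ) := ⟨fun j => grid (m j), memℓp_infty_of_forall_mem _ hmem⟩
  have hz : z ∈ fewValued ε := by
    refine ⟨_, hmem, ?_⟩
    have hcard : (#((range N).image grid) : ℝ) ≤ N := by
      exact_mod_cast card_image_le.trans (card_range N).le
    calc _ ≤ ((N : ℝ) - 1) * δ := mul_le_mul (by linarith) hεδ.le hε (by linarith)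
      _ < δ⁻¹ * δ := mul_lt_mul_of_pos_right hNδ hδ
      _ = 1 := inv_mul_cancel₀ hδ.ne'
  calc infDist y (fewValued ε) ≤ dist y z := infDist_le_dist_of_mem hz
    _ ≤ R / N := by
      rw [dist_eq_norm]
      exact lp.norm_le_of_forall_le (by positivity) fun j => hm j
    _ ≤ R * δ := by
      rw [div_eq_mul_inv]
      exact mul_le_mul_of_nonneg_left (inv_le_of_inv_le₀ hδ hδN) hR.le

/-- Coordinates are indexed by pairs `(a, b) = Nat.unpair j`: the lower triangle `b ≤ a` carries
the grid points `2b/a - 1` of `gridVector`, and row `n` of the strict upper triangle carries the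
values `1/b` of `rowVector n`. -/
def gridFun (p : ℕ × ℕ) : ℝ := if p.2 ≤ p.1 then 2 * p.2 / p.1 - 1 else 0

def rowFun (n : ℕ) (p : ℕ × ℕ) : ℝ := if p.1 = n ∧ n < p.2 then (p.2 : ℝ)⁻¹ else 0

lemma abs_gridFun_le_one (p : ℕ × ℕ) : |gridFun p| ≤ 1 := by
  unfold gridFun
  split_ifs with h
  · have h₀ : 0 ≤ 2 * (p.2 : ℝ) / p.1 := by positivity
    have h₂ : 2 * (p.2 : ℝ) / p.1 ≤ 2 :=
      div_le_of_le_mul₀ (by positivity) zero_le_two (by norm_cast; omega)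
    rw [abs_le]; constructor <;> linarith
  · simp

lemma abs_rowFun_le_one (n : ℕ) (p : ℕ × ℕ) : |rowFun n p| ≤ 1 := by
  unfold rowFun
  split_ifs with h
  · rw [abs_inv, Nat.abs_cast]
    exact inv_le_one_of_one_le₀ (by exact_mod_cast h.2.trans_le' n.zero_le)
  · simp

def gridVector : ℓ^∞(ℕ, ℝ) :=
  ⟨fun j => gridFun j.unpair, memℓp_infty_of_abs_le_one fun _ => abs_gridFun_le_one _⟩

def rowVector (n : ℕ) : ℓ^∞(ℕ, ℝ) :=
  ⟨fun j => rowFun n j.unpair, memℓp_infty_of_abs_le_one fun _ => abs_rowFun_le_one n _⟩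

lemma gridVector_pair (a b : ℕ) : gridVector (Nat.pair a b) = gridFun (a, b) := by
  simp [gridVector]

lemma rowVector_pair (n a b : ℕ) : rowVector n (Nat.pair a b) = rowFun n (a, b) := by
  simp [rowVector]

lemma norm_gridVector : ‖gridVector‖ = 1 :=
  le_antisymm (lp.norm_le_of_forall_le zero_le_one fun _ => abs_gridFun_le_one _)
    (by simpa [gridVector, gridFun] using lp.norm_apply_le_norm ENNReal.top_ne_zero gridVector 0)

lemma inv_card_le_dist_gridVector {z : ℓ^∞(ℕ, ℝ)} {S : Finset ℝ}
    (hz : ∀ m ≤ #S, z (Nat.pair #S m) ∈ S) : (#S : ℝ)⁻¹ ≤ dist gridVector z := by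
  set N := #S
  have hN : (0 : ℝ) < N := by exact_mod_cast card_pos.2 ⟨_, hz 0 N.zero_le⟩
  obtain ⟨m, hmN, m', hm'N, hne, heq⟩ := exists_ne_map_eq_of_card_lt_of_maps_to
    (s := range (N + 1)) (by simp [N]) (f := fun m => z (Nat.pair N m))
    fun m hm => hz m (Nat.lt_succ_iff.1 (mem_range.1 hm))
  have hcoord : ∀ j, |gridVector j - z j| ≤ dist gridVector z := fun j => by
    rw [dist_eq_norm]; exact lp.norm_apply_le_norm ENNReal.top_ne_zero (gridVector - z) j
  have hsep : 2 * (N : ℝ)⁻¹ ≤ |gridVector (Nat.pair N m) - gridVector (Nat.pair N m')| := by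
    have h₁ : (1 : ℝ) ≤ |(m : ℝ) - m'| := by
      exact_mod_cast Int.one_le_abs (sub_ne_zero.2 (Int.ofNat_inj.not.2 hne))
    rw [mem_range, Nat.lt_succ_iff] at hmN hm'N
    simp only [gridVector_pair, gridFun, if_pos hmN, if_pos hm'N]
    rw [show 2 * (m : ℝ) / N - 1 - (2 * m' / N - 1) = 2 * (N : ℝ)⁻¹ * (m - m') by ring,
      abs_mul, abs_of_pos (by positivity)]
    exact le_mul_of_one_le_right (by positivity) h₁
  have hm := hcoord (Nat.pair N m)
  have hm' := hcoord (Nat.pair N m')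
  rw [heq] at hm
  have htri := abs_sub_le (gridVector (Nat.pair N m)) (z (Nat.pair N m'))
    (gridVector (Nat.pair N m'))
  rw [abs_sub_comm (z _)] at htri
  linarith

def rowSpan (n : ℕ) : Submodule ℝ ℓ^∞(ℕ, ℝ) := Submodule.span ℝ (rowVector '' Set.Iio n)

lemma apply_eq_zero_of_mem_rowSpan {n j : ℕ} (h : ∀ i < n, rowVector i j = 0)
    {v : ℓ^∞(ℕ, ℝ)} (hv : v ∈ rowSpan n) : v j = 0 := by
  induction hv using Submodule.span_induction with
  | mem w hw => obtain ⟨i, hi, rfl⟩ := hw; exact h i hi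
  | zero => rfl
  | add v w _ _ hv hw => simp [hv, hw]
  | smul c v _ hv => simp [hv]

def scheme (ε : ℕ → ℝ) (n : ℕ) : Set ℓ^∞(ℕ, ℝ) := fewValued (ε n) + rowSpan n

variable {ε : ℕ → ℝ}

lemma fewValued_subset_scheme (n : ℕ) : fewValued (ε n) ⊆ scheme ε n :=
  fun y hy => ⟨y, hy, 0, zero_mem _, add_zero y⟩

lemma scheme_mono (hε : Antitone ε) : Monotone (scheme ε) := fun _ _ h =>
  Set.add_subset_add (fewValued_anti (hε h))
    (Submodule.span_mono (Set.image_mono (Set.Iio_subset_Iio h)))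

lemma rowVector_mem_scheme (n : ℕ) : rowVector n ∈ scheme ε (n + 1) :=
  ⟨0, zero_mem_fewValued _, rowVector n, Submodule.subset_span ⟨n, n.lt_succ_self, rfl⟩,
    zero_add _⟩

lemma rowVector_notMem_scheme (n : ℕ) : rowVector n ∉ scheme ε n := by
  rintro ⟨b, ⟨S, hbS, -⟩, v, hv, hbv⟩
  have hrow : ∀ k, b (Nat.pair n (n + 1 + k)) = ((n + 1 + k : ℕ) : ℝ)⁻¹ := fun k => by
    have hv₀ : v (Nat.pair n (n + 1 + k)) = 0 :=
      apply_eq_zero_of_mem_rowSpan (fun i hi => by simp [rowVector_pair, rowFun, hi.ne']) hv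
    have := congrArg (· (Nat.pair n (n + 1 + k))) hbv
    simpa [rowVector_pair, rowFun, hv₀, show n < n + 1 + k by omega] using this
  refine Set.not_infinite.2 S.finite_toSet (Set.infinite_of_injective_forall_mem ?_ fun k =>
    hrow k ▸ hbS (Nat.pair n (n + 1 + k)))
  intro k k' h
  simpa using h

lemma add_mem_scheme {n m : ℕ} (hnm : n ≤ m) (hεn : 0 ≤ ε n) (hεm : 0 ≤ ε m)
    (h : ε m * (1 + ε n) ^ 2 ≤ ε n ^ 2) {y z : ℓ^∞(ℕ, ℝ)} (hy : y ∈ scheme ε n)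
    (hz : z ∈ scheme ε n) : y + z ∈ scheme ε m := by
  obtain ⟨b, hb, v, hv, rfl⟩ := hy
  obtain ⟨b', hb', v', hv', rfl⟩ := hz
  refine ⟨b + b', add_mem_fewValued hεn hεm h hb hb', v + v', ?_, add_add_add_comm b b' v v'⟩
  exact Submodule.span_mono (Set.image_mono (Set.Iio_subset_Iio hnm)) (add_mem hv hv')

lemma smul_mem_scheme {n : ℕ} (hε : 0 ≤ ε n) (c : ℝ) {y : ℓ^∞(ℕ, ℝ)} (hy : y ∈ scheme ε n) :
    c • y ∈ scheme ε n := by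
  obtain ⟨b, hb, v, hv, rfl⟩ := hy
  exact ⟨c • b, smul_mem_fewValued hε c hb, c • v, Submodule.smul_mem _ c hv, (smul_add c b v).symm⟩

lemma exists_ge_mul_sq_le (hε : ∀ n, 0 ≤ ε n) (hlim : Tendsto ε atTop (nhds 0)) (n : ℕ) :
    ∃ m ≥ n, ε m * (1 + ε n) ^ 2 ≤ ε n ^ 2 := by
  rcases (hε n).eq_or_lt with h | h
  · exact ⟨n, le_rfl, by simp [← h]⟩
  · obtain ⟨m, hm, hnm⟩ := ((hlim.eventually (gt_mem_nhds
      (show 0 < ε n ^ 2 / (1 + ε n) ^ 2 by positivity))).and (eventually_ge_atTop n)).exists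
    exact ⟨m, hnm, (le_div_iff₀ (by positivity)).1 hm.le⟩

lemma dense_iUnion_scheme (hε : ∀ n, 0 ≤ ε n) (hlim : Tendsto ε atTop (nhds 0)) :
    Dense (⋃ n, scheme ε n) := by
  rw [Metric.dense_iff]
  intro y r hr
  have hR : 0 < ‖y‖ + 1 := by positivity
  obtain ⟨n, hn⟩ := (hlim.eventually (gt_mem_nhds
    (show 0 < r / (2 * (‖y‖ + 1)) by positivity))).exists
  have hdist := infDist_fewValued_le (hε n) hn hR (le_add_of_nonneg_right zero_le_one)
  have hr₂ : (‖y‖ + 1) * (r / (2 * (‖y‖ + 1))) < r := by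
    rw [mul_div_left_comm, div_mul_cancel_right₀ hR.ne']; linarith
  obtain ⟨z, hz, hyz⟩ := (infDist_lt_iff ⟨0, zero_mem_fewValued _⟩).1 (hdist.trans_lt hr₂)
  exact ⟨z, mem_ball'.2 hyz, Set.mem_iUnion.2 ⟨n, fewValued_subset_scheme n hz⟩⟩

lemma infDist_scheme_le {n : ℕ} (hε : 0 ≤ ε n) {u : ℓ^∞(ℕ, ℝ)} (hu : ‖u‖ = 1) :
    infDist u (scheme ε n) ≤ ε n :=
  le_of_forall_gt_imp_ge_of_dense fun δ hδ =>
    (infDist_le_infDist_of_subset (fewValued_subset_scheme n) ⟨0, zero_mem_fewValued _⟩).trans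
      (by simpa using infDist_fewValued_le hε hδ one_pos hu.le)

lemma div_one_add_le_infDist_gridVector {n : ℕ} (hε : 0 ≤ ε n) :
    ε n / (1 + ε n) ≤ infDist gridVector (scheme ε n) := by
  rw [le_infDist ⟨0, fewValued_subset_scheme n (zero_mem_fewValued _)⟩]
  rintro _ ⟨b, ⟨S, hbS, hS⟩, v, hv, rfl⟩
  have hz : ∀ m ≤ #S, (b + v) (Nat.pair #S m) ∈ S := fun m hm => by
    have hv₀ : v (Nat.pair #S m) = 0 :=
      apply_eq_zero_of_mem_rowSpan (fun i _ => by simp [rowVector_pair, rowFun]; omega) hv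
    simpa [hv₀] using hbS _
  refine le_trans ?_ (inv_card_le_dist_gridVector hz)
  have hS₁ := one_le_card_of_forall_mem hbS
  rw [div_le_iff₀ (by positivity), inv_mul_eq_div, le_div_iff₀ (by positivity)]
  linarith

end

end LInftyScheme

open LInftyScheme

open ENNReal in
theorem stmt12 (ε : ℕ → ℝ) (hnonneg : ∀ n, 0 ≤ ε n) (hone : ε 1 ≤ 1)
    (hmono : Antitone ε) (hlim : Tendsto ε atTop (nhds 0)) :
    ∃ (A : ℕ → Set (lp (fun _ : ℕ => ℝ) ∞)) (K : ℕ → ℕ),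
      IsApproximationScheme A K ∧
      (∀ n, 1 ≤ n → sphDist (A n) ≤ ε n) ∧
      ∃ x : lp (fun _ : ℕ => ℝ) ∞, ‖x‖ = 1 ∧
        ∀ n, 1 ≤ n → ε n / (1 + ε n) ≤ infDist x (A n) ∧
          ε n / 2 ≤ infDist x (A n) := by
  choose K hnK hK using exists_ge_mul_sq_le hnonneg hlim
  have hscheme : IsApproximationScheme (scheme ε) K :=
    { subset_succ := fun n => scheme_mono hmono n.le_succ
      ne_succ := fun n h => rowVector_notMem_scheme n (h ▸ rowVector_mem_scheme n)
      le_K := hnK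
      add_mem := fun n _ hy _ hz => add_mem_scheme (hnK n) (hnonneg n) (hnonneg _) (hK n) hy hz
      smul_mem := fun n c _ hy => smul_mem_scheme (hnonneg n) c hy
      dense_union := dense_iUnion_scheme hnonneg hlim }
  refine ⟨scheme ε, K, hscheme, fun n _ => ?_, gridVector, norm_gridVector, fun n hn => ?_⟩
  · have : Nonempty {x : ℓ^∞(ℕ, ℝ) // ‖x‖ = 1} := ⟨⟨gridVector, norm_gridVector⟩⟩
    exact ciSup_le fun u => infDist_scheme_le (hnonneg n) u.2
  · have hlow := div_one_add_le_infDist_gridVector (hnonneg n)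
    refine ⟨hlow, le_trans ?_ hlow⟩
    exact div_le_div_of_nonneg_left (hnonneg n) (by linarith [hnonneg n])
      (by linarith [(hmono hn).trans hone])
end

section
/- Let X be an infinite-dimensional real Banach space and let (A_n) be an approximation scheme in X. The following are equivalent: (i) (X,(A_n)) does not satisfy Shapiro's Theorem; (ii) there exists a finite-codimensional linear subspace Y of X and a sequence (c_n) of positive reals with c_n → ∞ such that E(y, A_n) ≤ ‖y‖/c_n for all y ∈ Y and all n; (iii) for every linear subspace Y of X there exists a sequence (c_n) of positive reals with c_n → ∞ such that E(y, A_n) ≤ ‖y‖/c_n for all y ∈ Y and all n. -/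
open Metric Filter

open Set Topology Pointwise

/-! Failure of Shapiro's theorem amounts to a uniform estimate `E(x, A n) ≤ ε n * ‖x‖` with
`ε n → 0`. If Shapiro's theorem fails for `ε`, Baire's theorem applied to the closed sets
`{x | ∀ n, E(x, A n) ≤ M * ε n}` gives a ball on which `M` is uniform; translating the ball to the
origin (`A n + A n ⊆ A (K n)`) and rescaling it (`λ • A n ⊆ A n`) spreads the estimate over `X`.
If the estimate holds on a finite-codimensional `Y`, it holds on the closed subspace `closure Y`,
and on a finite-dimensional complement of it pointwise convergence is uniform on the compact unit
sphere by Dini's theorem; the continuous projections onto the two summands combine the two. -/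

theorem exists_antitone_pos_tendsto_zero_ge {u : ℕ → ℝ} (hu0 : ∀ n, 0 ≤ u n)
    (hu : Tendsto u atTop (𝓝 0)) :
    ∃ ε : ℕ → ℝ, (∀ n, 0 < ε n) ∧ Antitone ε ∧ Tendsto ε atTop (𝓝 0) ∧ ∀ n, u n ≤ ε n := by
  have hbdd : ∀ m, BddAbove (range fun k => u (m + k)) := fun m =>
    hu.bddAbove_range.mono (range_subset_iff.2 fun k => mem_range_self _)
  set s : ℕ → ℝ := fun m => ⨆ k, u (m + k)
  have hus : ∀ m, u m ≤ s m := fun m => le_ciSup (hbdd m) 0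
  have hs_anti : Antitone s := fun m m' hm => ciSup_le fun k => by
    simpa [← add_assoc, Nat.add_sub_cancel' hm] using le_ciSup (hbdd m) (m' - m + k)
  have hs : Tendsto s atTop (𝓝 0) := by
    refine tendsto_order.2 ⟨fun a ha => Eventually.of_forall fun m =>
      ha.trans_le ((hu0 m).trans (hus m)), fun a ha => ?_⟩
    obtain ⟨N, hN⟩ := eventually_atTop.1 (hu.eventually (ge_mem_nhds (half_pos ha)))
    filter_upwards [eventually_ge_atTop N] with m hm
    exact (ciSup_le fun k => hN (m + k) (by omega)).trans_lt (half_lt_self ha)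
  refine ⟨fun m => s m + 1 / (m + 1), fun m => ?_, fun m m' hm => ?_, ?_, fun m => ?_⟩
  · have := (hu0 m).trans (hus m)
    positivity
  · have : ((m : ℝ) + 1) ≤ m' + 1 := by exact_mod_cast Nat.add_le_add_right hm 1
    exact add_le_add (hs_anti hm) (one_div_le_one_div_of_le (by positivity) this)
  · simpa using hs.add tendsto_one_div_add_atTop_nhds_zero_nat
  · exact (hus m).trans (le_add_of_nonneg_right (by positivity))

theorem exists_ball_forall_le_mul_of_forall_exists {α : Type*} [MetricSpace α] [CompleteSpace α]
    [Nonempty α] {f : ℕ → α → ℝ} (hf : ∀ n, Continuous (f n)) {ε : ℕ → ℝ} (hε : ∀ n, 0 ≤ ε n)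
    (h : ∀ x, ∃ M, ∀ n, f n x ≤ M * ε n) :
    ∃ x₀, ∃ r > 0, ∃ M : ℝ, ∀ y ∈ ball x₀ r, ∀ n, f n y ≤ M * ε n := by
  set F : ℕ → Set α := fun M => ⋂ n, {x | f n x ≤ M * ε n}
  have hF : ∀ M, IsClosed (F M) := fun M =>
    isClosed_iInter fun n => isClosed_le (hf n) continuous_const
  have hcover : ⋃ M, F M = univ := eq_univ_of_forall fun x => by
    obtain ⟨M, hM⟩ := h x
    exact mem_iUnion.2 ⟨⌈M⌉₊, mem_iInter.2 fun n =>
      (hM n).trans (mul_le_mul_of_nonneg_right (Nat.le_ceil M) (hε n))⟩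
  obtain ⟨M, x₀, hx₀⟩ := nonempty_interior_of_iUnion_of_closed hF hcover
  obtain ⟨r, hr, hball⟩ := Metric.isOpen_iff.1 isOpen_interior x₀ hx₀
  exact ⟨x₀, r, hr, M, fun y hy => mem_iInter.1 (interior_subset (hball hy))⟩

section Cone

variable {X : Type*} [NormedAddCommGroup X] {A : Set X}

theorem sphDist_nonneg (A : Set X) : 0 ≤ sphDist A :=
  Real.iSup_nonneg fun _ => infDist_nonneg

theorem sphDist_le {b : ℝ} (hb : 0 ≤ b) (h : ∀ x : X, ‖x‖ = 1 → infDist x A ≤ b) :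
    sphDist A ≤ b :=
  Real.iSup_le (fun x => h x x.2) hb

variable [NormedSpace ℝ X] (hA : ∀ c : ℝ, ∀ x ∈ A, c • x ∈ A)
include hA

theorem infDist_zero_of_forall_smul_mem : infDist (0 : X) A = 0 := by
  rcases A.eq_empty_or_nonempty with rfl | ⟨a, ha⟩
  · exact infDist_empty
  · exact infDist_zero_of_mem (by simpa using hA 0 a ha)

theorem infDist_le_norm_of_forall_smul_mem (x : X) : infDist x A ≤ ‖x‖ := by
  simpa [infDist_zero_of_forall_smul_mem hA] using
    infDist_le_infDist_add_dist (x := x) (y := 0) (s := A)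

theorem smul_set_eq_of_forall_smul_mem {t : ℝ} (ht : t ≠ 0) : t • A = A :=
  (smul_set_subset_iff.2 fun x hx => hA t x hx).antisymm fun x hx =>
    ⟨t⁻¹ • x, hA _ x hx, smul_inv_smul₀ ht x⟩

theorem infDist_smul_of_forall_smul_mem (t : ℝ) (x : X) :
    infDist (t • x) A = |t| * infDist x A := by
  rcases eq_or_ne t 0 with rfl | ht
  · simp [infDist_zero_of_forall_smul_mem hA]
  · rw [← Real.norm_eq_abs, ← infDist_smul₀ ht, smul_set_eq_of_forall_smul_mem hA ht]

theorem infDist_le_mul_norm_of_forall_norm_eq_one {V : Submodule ℝ X} {e : ℝ}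
    (h : ∀ u ∈ V, ‖u‖ = 1 → infDist u A ≤ e) {x : X} (hx : x ∈ V) :
    infDist x A ≤ e * ‖x‖ := by
  rcases eq_or_ne x 0 with rfl | hx0
  · simp [infDist_zero_of_forall_smul_mem hA]
  have hnx : ‖x‖ ≠ 0 := norm_ne_zero_iff.2 hx0
  have hu := h (‖x‖⁻¹ • x) (V.smul_mem _ hx) (norm_smul_inv_norm hx0)
  calc infDist x A = ‖x‖ * infDist (‖x‖⁻¹ • x) A := by
        conv_lhs => rw [← smul_inv_smul₀ hnx x]
        rw [infDist_smul_of_forall_smul_mem hA, abs_norm]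
    _ ≤ ‖x‖ * e := by gcongr
    _ = e * ‖x‖ := mul_comm _ _

theorem infDist_le_mul_norm_of_forall_norm_lt {r b : ℝ} (hr : 0 < r)
    (h : ∀ y : X, ‖y‖ < r → infDist y A ≤ b) (x : X) :
    infDist x A ≤ 2 * b / r * ‖x‖ := by
  refine infDist_le_mul_norm_of_forall_norm_eq_one hA (V := ⊤) (fun u _ hu => ?_) trivial
  have hy : ‖(r / 2) • u‖ < r := by
    rw [norm_smul, hu, Real.norm_of_nonneg (by positivity)]
    linarith
  have := h _ hy
  rw [infDist_smul_of_forall_smul_mem hA, abs_of_pos (by positivity)] at this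
  rw [le_div_iff₀ hr]
  linarith

theorem infDist_le_sphDist_mul_norm (x : X) : infDist x A ≤ sphDist A * ‖x‖ := by
  have hbdd : BddAbove (range fun u : {x : X // ‖x‖ = 1} => infDist (u : X) A) :=
    ⟨1, forall_mem_range.2 fun u => (infDist_le_norm_of_forall_smul_mem hA u).trans u.2.le⟩
  exact infDist_le_mul_norm_of_forall_norm_eq_one hA (V := ⊤)
    (fun u _ hu => le_ciSup hbdd ⟨u, hu⟩) trivial

end Cone

section Uniform

variable {X : Type*} [NormedAddCommGroup X] {A : ℕ → Set X}

def UniformlyApproximates (A : ℕ → Set X) (V : Set X) : Prop :=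
  ∀ e > 0, ∀ᶠ n in atTop, ∀ x ∈ V, infDist x (A n) ≤ e * ‖x‖

theorem UniformlyApproximates.closure {V : Set X}
    (h : UniformlyApproximates A V) : UniformlyApproximates A (closure V) := by
  intro e he
  filter_upwards [h e he] with n hn x hx
  exact closure_minimal hn (isClosed_le (continuous_infDist_pt _) (continuous_norm.const_mul e)) hx

variable [NormedSpace ℝ X]

theorem UniformlyApproximates.exists_antitone_bound (h : UniformlyApproximates A univ)
    (hA : ∀ n (c : ℝ), ∀ x ∈ A n, c • x ∈ A n) :
    ∃ ε : ℕ → ℝ, (∀ n, 0 < ε n) ∧ Antitone ε ∧ Tendsto ε atTop (𝓝 0) ∧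
      ∀ x n, infDist x (A n) ≤ ε n * ‖x‖ := by
  have hsph : Tendsto (fun n => sphDist (A n)) atTop (𝓝 0) := by
    refine tendsto_order.2 ⟨fun a ha => Eventually.of_forall fun n =>
      ha.trans_le (sphDist_nonneg _), fun a ha => ?_⟩
    filter_upwards [h (a / 2) (half_pos ha)] with n hn
    refine (sphDist_le (half_pos ha).le fun x hx => ?_).trans_lt (half_lt_self ha)
    simpa [hx] using hn x trivial
  obtain ⟨ε, hpos, hanti, hε, hle⟩ :=
    exists_antitone_pos_tendsto_zero_ge (fun n => sphDist_nonneg (A n)) hsph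
  exact ⟨ε, hpos, hanti, hε, fun x n => (infDist_le_sphDist_mul_norm (hA n) x).trans
    (mul_le_mul_of_nonneg_right (hle n) (norm_nonneg x))⟩

end Uniform

namespace IsApproximationScheme

variable {X : Type*} [NormedAddCommGroup X] [NormedSpace ℝ X] {A : ℕ → Set X} {K : ℕ → ℕ}
  (hA : IsApproximationScheme A K)
include hA

theorem monotone_s13 : Monotone A :=
  monotone_nat_of_le_succ hA.subset_succ

theorem nonempty_of_pos {n : ℕ} (hn : 0 < n) : (A n).Nonempty := by
  obtain ⟨m, rfl⟩ := Nat.exists_eq_add_one_of_ne_zero hn.ne'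
  refine nonempty_iff_ne_empty.2 fun h => hA.ne_succ m ?_
  rw [h, ← subset_empty_iff, ← h]
  exact hA.subset_succ m

theorem infDist_add_le {n : ℕ} (hn : (A n).Nonempty) (x y : X) :
    infDist (x + y) (A (K n)) ≤ infDist x (A n) + infDist y (A n) := by
  refine le_of_forall_pos_le_add fun e he => ?_
  obtain ⟨a, ha, hxa⟩ :=
    (infDist_lt_iff hn).1 (lt_add_of_pos_right (infDist x (A n)) (half_pos he))
  obtain ⟨b, hb, hyb⟩ :=
    (infDist_lt_iff hn).1 (lt_add_of_pos_right (infDist y (A n)) (half_pos he))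
  calc infDist (x + y) (A (K n)) ≤ dist (x + y) (a + b) :=
        infDist_le_dist_of_mem (hA.add_mem n a ha b hb)
    _ ≤ dist x a + dist y b := dist_add_add_le x y a b
    _ ≤ infDist x (A n) + infDist y (A n) + e := by linarith

theorem tendsto_infDist (x : X) : Tendsto (fun n => infDist x (A n)) atTop (𝓝 0) := by
  refine Metric.tendsto_atTop.2 fun e he => ?_
  obtain ⟨a, ha, hxa⟩ := Metric.mem_closure_iff.1 (hA.dense_union x) e he
  obtain ⟨m, ham⟩ := mem_iUnion.1 ha
  refine ⟨m, fun n hn => ?_⟩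
  rw [Real.dist_eq, sub_zero, abs_of_nonneg infDist_nonneg]
  exact (infDist_le_dist_of_mem (hA.monotone_s13 hn ham)).trans_lt hxa

theorem uniformlyApproximates_of_comp (h : UniformlyApproximates (fun n => A (K n)) univ) :
    UniformlyApproximates A univ := by
  intro e he
  obtain ⟨n, hn, hn1⟩ := ((h e he).and (eventually_ge_atTop 1)).exists
  filter_upwards [eventually_ge_atTop (K n)] with m hm x _
  exact (infDist_le_infDist_of_subset (hA.monotone_s13 hm)
    (hA.nonempty_of_pos (hn1.trans (hA.le_K n)))).trans (hn x trivial)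

theorem infDist_comp_le_of_ball {n : ℕ} (hn : (A n).Nonempty) {x₀ : X} {r b : ℝ}
    (hball : ∀ y ∈ ball x₀ r, infDist y (A n) ≤ b) {y : X} (hy : ‖y‖ < r) :
    infDist y (A (K n)) ≤ 2 * b := by
  have hx₀ : infDist (-x₀) (A n) ≤ b := by
    rw [← neg_one_smul ℝ x₀, infDist_smul_of_forall_smul_mem (hA.smul_mem n), abs_neg, abs_one,
      one_mul]
    exact hball x₀ (mem_ball_self ((norm_nonneg y).trans_lt hy))
  calc infDist y (A (K n)) = infDist ((x₀ + y) + -x₀) (A (K n)) := by abel_nf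
    _ ≤ infDist (x₀ + y) (A n) + infDist (-x₀) (A n) := hA.infDist_add_le hn _ _
    _ ≤ 2 * b := by
      have := hball (x₀ + y) (by rwa [mem_ball, dist_eq_norm, add_sub_cancel_left])
      linarith

theorem uniformlyApproximates_of_not_satisfiesShapiro [CompleteSpace X]
    (h : ¬ SatisfiesShapiro A) : UniformlyApproximates A univ := by
  simp only [SatisfiesShapiro, not_forall, not_exists, not_not, exists_prop] at h
  obtain ⟨ε, hpos, -, hε, hbdd⟩ := h
  obtain ⟨x₀, r, hr, M, hball⟩ := exists_ball_forall_le_mul_of_forall_exists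
    (fun n => continuous_infDist_pt (A n)) (fun n => (hpos n).le) hbdd
  refine hA.uniformlyApproximates_of_comp fun e he => ?_
  have hlim : Tendsto (fun n => 2 * (2 * (M * ε n)) / r) atTop (𝓝 0) := by
    simpa using ((hε.const_mul M).const_mul 2 |>.const_mul 2).div_const r
  filter_upwards [hlim.eventually (ge_mem_nhds he), eventually_ge_atTop 1] with n hn hn1 x _
  refine (infDist_le_mul_norm_of_forall_norm_lt (hA.smul_mem (K n)) hr (fun y hy => ?_) x).trans
    (mul_le_mul_of_nonneg_right hn (norm_nonneg x))
  exact hA.infDist_comp_le_of_ball (hA.nonempty_of_pos hn1) (fun z hz => hball z hz n) hy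

theorem uniformlyApproximates_of_finiteDimensional (G : Submodule ℝ X) [FiniteDimensional ℝ G] :
    UniformlyApproximates A G := by
  set S : Set X := (↑) '' sphere (0 : G) 1
  have hS : IsCompact S := (isCompact_sphere (0 : G) 1).image continuous_subtype_val
  -- `A 0` may be empty (and `infDist x ∅ = 0`), so Dini's theorem is applied from index 1 on
  have hunif : TendstoUniformlyOn (fun n x => infDist x (A (n + 1))) 0 atTop S :=
    Antitone.tendstoUniformlyOn_of_forall_tendsto hS
      (fun n => (continuous_infDist_pt _).continuousOn)
      (fun x _ => antitone_nat_of_succ_le fun n =>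
        infDist_le_infDist_of_subset (hA.subset_succ _) (hA.nonempty_of_pos n.succ_pos))
      continuousOn_const fun x _ => (hA.tendsto_infDist x).comp (tendsto_add_atTop_nat 1)
  intro e he
  obtain ⟨N, hN⟩ := eventually_atTop.1 (Metric.tendstoUniformlyOn_iff.1 hunif e he)
  refine eventually_atTop.2 ⟨N + 1, fun m hm x hx => ?_⟩
  obtain ⟨n, rfl⟩ := Nat.exists_eq_add_one_of_ne_zero (by omega : m ≠ 0)
  refine infDist_le_mul_norm_of_forall_norm_eq_one (hA.smul_mem _) (fun u hu hu1 => ?_) hx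
  have := hN n (by omega) u ⟨⟨u, hu⟩, by simpa using hu1, rfl⟩
  rw [Pi.zero_apply, dist_zero_left, Real.norm_of_nonneg infDist_nonneg] at this
  exact this.le

theorem uniformlyApproximates_comp_of_isTopCompl {Z G : Submodule ℝ X} (h : Z.IsTopCompl G)
    (hZ : UniformlyApproximates A Z) (hG : UniformlyApproximates A G) :
    UniformlyApproximates (fun n => A (K n)) univ := by
  set P := Z.projectionL G h
  set Q := G.projectionL Z h.symm
  intro e he
  set C := ‖P‖ + ‖Q‖ + 1
  have hC : 0 < C := by positivity
  filter_upwards [hZ (e / C) (by positivity), hG (e / C) (by positivity),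
    eventually_ge_atTop 1] with n hZn hGn hn x _
  calc infDist x (A (K n)) = infDist (P x + Q x) (A (K n)) := by
        rw [Submodule.projectionL_add_projectionL_eq_self]
    _ ≤ infDist (P x) (A n) + infDist (Q x) (A n) :=
        hA.infDist_add_le (hA.nonempty_of_pos hn) _ _
    _ ≤ e / C * ‖P x‖ + e / C * ‖Q x‖ := add_le_add
        (hZn _ (Z.projectionL_apply_mem h x)) (hGn _ (G.projectionL_apply_mem h.symm x))
    _ ≤ e / C * (‖P‖ * ‖x‖) + e / C * (‖Q‖ * ‖x‖) := by
        gcongr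
        exacts [P.le_opNorm x, Q.le_opNorm x]
    _ ≤ e * ‖x‖ := by
        rw [← mul_add, ← add_mul, div_mul_eq_mul_div, div_le_iff₀ hC]
        nlinarith [norm_nonneg x, norm_nonneg P, norm_nonneg Q]

theorem uniformlyApproximates_of_finiteDimensional_quotient (Y : Submodule ℝ X)
    [FiniteDimensional ℝ (X ⧸ Y)] {c : ℕ → ℝ} (hc : Tendsto c atTop atTop)
    (hY : ∀ y ∈ Y, ∀ n, infDist y (A n) ≤ ‖y‖ / c n) : UniformlyApproximates A univ := by
  set Z := Y.topologicalClosure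
  have hZ : UniformlyApproximates A Z := by
    rw [Submodule.topologicalClosure_coe]
    refine UniformlyApproximates.closure fun e he => ?_
    filter_upwards [hc.eventually_ge_atTop e⁻¹] with n hn y hy
    calc infDist y (A n) ≤ ‖y‖ / c n := hY y hy n
      _ ≤ ‖y‖ / e⁻¹ := div_le_div_of_nonneg_left (norm_nonneg y) (by positivity) hn
      _ = e * ‖y‖ := by rw [div_inv_eq_mul, mul_comm]
  have : FiniteDimensional ℝ (X ⧸ Z) :=
    Module.Finite.of_surjective _ (Submodule.factor_surjective Y.le_topologicalClosure)
  obtain ⟨G, hG⟩ := Z.exists_isCompl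
  have : FiniteDimensional ℝ G := (Z.quotientEquivOfIsCompl G hG).finiteDimensional
  exact hA.uniformlyApproximates_of_comp <| hA.uniformlyApproximates_comp_of_isTopCompl
    (Submodule.IsCompl.isTopCompl_of_finiteDimensional_quotient hG
      Y.isClosed_topologicalClosure) hZ
    (hA.uniformlyApproximates_of_finiteDimensional G)

theorem not_satisfiesShapiro_of_uniformlyApproximates (h : UniformlyApproximates A univ) :
    ¬ SatisfiesShapiro A := fun hS => by
  obtain ⟨ε, hpos, hanti, hε, hle⟩ := h.exists_antitone_bound hA.smul_mem
  obtain ⟨x, hx⟩ := hS ε hpos hanti hε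
  exact hx ⟨‖x‖, fun n => (hle x n).trans_eq (mul_comm _ _)⟩

theorem exists_tendsto_atTop_of_uniformlyApproximates (h : UniformlyApproximates A univ) :
    ∃ c : ℕ → ℝ, (∀ n, 0 < c n) ∧ Tendsto c atTop atTop ∧
      ∀ x n, infDist x (A n) ≤ ‖x‖ / c n := by
  obtain ⟨ε, hpos, -, hε, hle⟩ := h.exists_antitone_bound hA.smul_mem
  refine ⟨fun n => (ε n)⁻¹, fun n => inv_pos.2 (hpos n), ?_, fun x n => ?_⟩
  · exact (tendsto_nhdsWithin_iff.2 ⟨hε, Eventually.of_forall hpos⟩).inv_tendsto_nhdsGT_zero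
  · rw [div_inv_eq_mul, mul_comm]
    exact hle x n

end IsApproximationScheme

theorem stmt13_general {X : Type*} [NormedAddCommGroup X] [NormedSpace ℝ X] [CompleteSpace X]
    (A : ℕ → Set X) (K : ℕ → ℕ)
    (hA : IsApproximationScheme A K) :
    (¬ SatisfiesShapiro A ↔
      ∃ Y : Submodule ℝ X, FiniteDimensional ℝ (X ⧸ Y) ∧
        ∃ c : ℕ → ℝ, (∀ n, 0 < c n) ∧ Tendsto c atTop atTop ∧
          ∀ y ∈ Y, ∀ n : ℕ, infDist y (A n) ≤ ‖y‖ / c n) ∧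
    (¬ SatisfiesShapiro A ↔
      ∀ Y : Submodule ℝ X, ∃ c : ℕ → ℝ, (∀ n, 0 < c n) ∧ Tendsto c atTop atTop ∧
        ∀ y ∈ Y, ∀ n : ℕ, infDist y (A n) ≤ ‖y‖ / c n) := by
  have hU : ¬ SatisfiesShapiro A ↔ UniformlyApproximates A univ :=
    ⟨hA.uniformlyApproximates_of_not_satisfiesShapiro,
      hA.not_satisfiesShapiro_of_uniformlyApproximates⟩
  have hbound := hA.exists_tendsto_atTop_of_uniformlyApproximates
  refine ⟨hU.trans ⟨fun h => ?_, ?_⟩, hU.trans ⟨fun h Y => ?_, fun h => ?_⟩⟩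
  · obtain ⟨c, hpos, hc, hle⟩ := hbound h
    exact ⟨⊤, inferInstance, c, hpos, hc, fun y _ => hle y⟩
  · rintro ⟨Y, hY, c, -, hc, hle⟩
    exact hA.uniformlyApproximates_of_finiteDimensional_quotient Y hc hle
  · obtain ⟨c, hpos, hc, hle⟩ := hbound h
    exact ⟨c, hpos, hc, fun y _ => hle y⟩
  · obtain ⟨c, -, hc, hle⟩ := h ⊤
    exact hA.uniformlyApproximates_of_finiteDimensional_quotient ⊤ hc hle

theorem stmt13 {X : Type*} [NormedAddCommGroup X] [NormedSpace ℝ X] [CompleteSpace X]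
    (hX : ¬ FiniteDimensional ℝ X) (A : ℕ → Set X) (K : ℕ → ℕ)
    (hA : IsApproximationScheme A K) :
    (¬ SatisfiesShapiro A ↔
      ∃ Y : Submodule ℝ X, FiniteDimensional ℝ (X ⧸ Y) ∧
        ∃ c : ℕ → ℝ, (∀ n, 0 < c n) ∧ Tendsto c atTop atTop ∧
          ∀ y ∈ Y, ∀ n : ℕ, infDist y (A n) ≤ ‖y‖ / c n) ∧
    (¬ SatisfiesShapiro A ↔
      ∀ Y : Submodule ℝ X, ∃ c : ℕ → ℝ, (∀ n, 0 < c n) ∧ Tendsto c atTop atTop ∧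
        ∀ y ∈ Y, ∀ n : ℕ, infDist y (A n) ≤ ‖y‖ / c n) :=
  stmt13_general A K hA
end

section
/- Let X be a real Banach space and let {0} = X_0 ⊊ X_1 ⊊ X_2 ⊊ ⋯ be an infinite strictly increasing sequence of closed linear subspaces of X. Then for every nonincreasing sequence (ε_n) of positive reals converging to 0 and every nonincreasing sequence (δ_n) of positive reals converging to 0, there exist x ∈ X, a constant C > 0, and a strictly increasing sequence (h(m))_{m≥0} of natural numbers such that δ_{h(m)} · ε_{h(m)} ≤ E(x, X_{h(m)}) ≤ C · ε_{h(m)} for all m ≥ 0. -/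
open Metric Filter

set_option maxHeartbeats 1000000

/-- Riesz lemma within a chain: a unit vector in `B` at distance ≥ 1/2 from `A`. -/
lemma riesz_in_chain {X : Type*} [NormedAddCommGroup X] [NormedSpace ℝ X]
    (A B : Submodule ℝ X) (hA : IsClosed (A : Set X)) (hAB : A < B) :
    ∃ y : X, y ∈ B ∧ ‖y‖ = 1 ∧ ∀ z ∈ A, (1 : ℝ) / 2 ≤ ‖y - z‖ := by
  set F : Submodule ℝ B := A.comap B.subtype with hF
  have hFc : IsClosed (F : Set B) := by
    exact hA.preimage continuous_subtype_val
  have hFne : ∃ x : B, x ∉ F := by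
    obtain ⟨w, hwB, hwA⟩ := SetLike.exists_of_lt hAB
    exact ⟨⟨w, hwB⟩, hwA⟩
  obtain ⟨x₀, hx₀F, hx₀⟩ := riesz_lemma (𝕜 := ℝ) hFc hFne (r := 1 / 2) (by norm_num)
  have hx₀ne : (x₀ : X) ≠ 0 := by
    intro h
    apply hx₀F
    have : x₀ = 0 := by
      ext; exact h
    rw [this]; exact F.zero_mem
  have hnorm : (0 : ℝ) < ‖(x₀ : X)‖ := norm_pos_iff.2 hx₀ne
  refine ⟨‖(x₀ : X)‖⁻¹ • (x₀ : X), B.smul_mem _ x₀.2, ?_, ?_⟩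
  · rw [norm_smul, norm_inv, norm_norm, inv_mul_cancel₀ hnorm.ne']
  · intro z hz
    have hz' : (‖(x₀ : X)‖ • z) ∈ A := A.smul_mem _ hz
    have hzB : (‖(x₀ : X)‖ • z) ∈ B := hAB.le hz'
    have key := hx₀ ⟨‖(x₀ : X)‖ • z, hzB⟩ hz'
    have hnx : ‖x₀‖ = ‖(x₀ : X)‖ := rfl
    have key' : 1 / 2 * ‖(x₀ : X)‖ ≤ ‖(x₀ : X) - ‖(x₀ : X)‖ • z‖ := by
      have : ‖x₀ - (⟨‖(x₀ : X)‖ • z, hzB⟩ : B)‖ = ‖(x₀ : X) - ‖(x₀ : X)‖ • z‖ := rfl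
      rw [hnx, this] at key
      exact key
    have heq : ‖(x₀ : X)‖⁻¹ • (x₀ : X) - z = ‖(x₀ : X)‖⁻¹ • ((x₀ : X) - ‖(x₀ : X)‖ • z) := by
      rw [smul_sub, smul_smul, inv_mul_cancel₀ hnorm.ne', one_smul]
    rw [heq, norm_smul, norm_inv, norm_norm, inv_mul_eq_div, le_div_iff₀ hnorm]
    linarith

theorem stmt17 {X : Type*} [NormedAddCommGroup X] [NormedSpace ℝ X] [CompleteSpace X]
    (Y : ℕ → Submodule ℝ X) (h0 : Y 0 = ⊥)
    (hclosed : ∀ n, IsClosed (Y n : Set X)) (hlt : ∀ n, Y n < Y (n + 1))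
    (ε : ℕ → ℝ) (hεpos : ∀ n, 0 < ε n) (hεmono : Antitone ε)
    (hεlim : Tendsto ε atTop (nhds 0))
    (δ : ℕ → ℝ) (hδpos : ∀ n, 0 < δ n) (hδmono : Antitone δ)
    (hδlim : Tendsto δ atTop (nhds 0)) :
    ∃ (x : X) (C : ℝ) (h : ℕ → ℕ), 0 < C ∧ StrictMono h ∧
      ∀ m : ℕ, δ (h m) * ε (h m) ≤ infDist x (Y (h m)) ∧
        infDist x (Y (h m)) ≤ C * ε (h m) := by
  have hYstrict : StrictMono Y := strictMono_nat_of_lt_succ hlt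
  -- choice of the subsequence
  have key : ∀ N : ℕ, ∃ M : ℕ, N < M ∧ ε M ≤ ε N / 8 ∧ δ M ≤ 1 / 4 := by
    intro N
    have h1 : ∀ᶠ M in atTop, ε M < ε N / 8 :=
      hεlim.eventually (gt_mem_nhds (div_pos (hεpos N) (by norm_num)))
    have h2 : ∀ᶠ M in atTop, δ M < 1 / 4 :=
      hδlim.eventually (gt_mem_nhds (by norm_num))
    have h3 : ∀ᶠ M in atTop, N < M := eventually_gt_atTop N
    obtain ⟨M, ⟨hM1, hM2⟩, hM3⟩ := ((h1.and h2).and h3).exists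
    exact ⟨M, hM3, hM1.le, hM2.le⟩
  obtain ⟨h, hδ0, hsucc⟩ : ∃ h : ℕ → ℕ, δ (h 0) ≤ 1 / 4 ∧
      ∀ k, h k < h (k + 1) ∧ ε (h (k + 1)) ≤ ε (h k) / 8 ∧ δ (h (k + 1)) ≤ 1 / 4 := by
    refine ⟨fun k => Nat.rec (key 0).choose (fun _ p => (key p).choose) k,
      (key 0).choose_spec.2.2, fun k => ?_⟩
    exact (key _).choose_spec
  have hδ4 : ∀ k, δ (h k) ≤ 1 / 4 := by
    intro k
    cases k with
    | zero => exact hδ0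
    | succ n => exact (hsucc n).2.2
  have hmono : StrictMono h := strictMono_nat_of_lt_succ fun k => (hsucc k).1
  -- geometric decay
  have hgeo : ∀ k j : ℕ, ε (h (k + j)) ≤ ε (h k) * (1 / 8) ^ j := by
    intro k j
    induction j with
    | zero => simp
    | succ n ih =>
      have := (hsucc (k + n)).2.1
      calc ε (h (k + (n + 1))) = ε (h (k + n + 1)) := by ring_nf
        _ ≤ ε (h (k + n)) / 8 := this
        _ ≤ ε (h k) * (1 / 8) ^ n / 8 := by linarith
        _ = ε (h k) * (1 / 8) ^ (n + 1) := by ring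
  -- the vectors from Riesz's lemma
  have hy : ∀ k : ℕ, ∃ y : X, y ∈ Y (h k + 1) ∧ ‖y‖ = 1 ∧
      ∀ z ∈ Y (h k), (1 : ℝ) / 2 ≤ ‖y - z‖ := by
    intro k
    exact riesz_in_chain (Y (h k)) (Y (h k + 1)) (hclosed _) (hlt _)
  choose y hyY hynorm hydist using hy
  set f : ℕ → X := fun k => ε (h k) • y k with hf
  have hfnorm : ∀ k, ‖f k‖ = ε (h k) := by
    intro k
    rw [hf]
    simp only [norm_smul, hynorm, mul_one, Real.norm_eq_abs, abs_of_pos (hεpos _)]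
  -- summability
  have hsumnorm : Summable fun k => ‖f k‖ := by
    apply Summable.of_nonneg_of_le (fun k => norm_nonneg _) (fun k => ?_)
      ((summable_geometric_of_lt_one (r := (1:ℝ)/8) (by norm_num) (by norm_num)).mul_left (ε (h 0)))
    rw [hfnorm k]
    simpa using hgeo 0 k
  have hsum : Summable f := hsumnorm.of_norm
  set x : X := ∑' k, f k with hx
  -- tail estimates
  have htail : ∀ k : ℕ, ‖∑' j, f (j + (k + 1))‖ ≤ ε (h k) / 7 := by
    intro k
    have hsn : Summable (fun j => ‖f (j + (k + 1))‖) :=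
      (summable_nat_add_iff (f := fun n => ‖f n‖) (k + 1)).2 hsumnorm
    have h1 : ‖∑' j, f (j + (k + 1))‖ ≤ ∑' j, ‖f (j + (k + 1))‖ :=
      norm_tsum_le_tsum_norm hsn
    have h2 : ∑' j : ℕ, ‖f (j + (k + 1))‖ ≤ ∑' j : ℕ, ε (h (k + 1)) * (1 / 8) ^ j := by
      apply Summable.tsum_le_tsum _ hsn
        ((summable_geometric_of_lt_one (r := (1:ℝ)/8) (by norm_num) (by norm_num)).mul_left _)
      intro j
      rw [hfnorm (j + (k + 1))]
      have := hgeo (k + 1) j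
      calc ε (h (j + (k + 1))) = ε (h ((k + 1) + j)) := by ring_nf
        _ ≤ ε (h (k + 1)) * (1 / 8) ^ j := hgeo (k + 1) j
    have h3 : ∑' j : ℕ, ε (h (k + 1)) * (1 / 8) ^ j = ε (h (k + 1)) * (8 / 7) := by
      rw [tsum_mul_left, tsum_geometric_of_lt_one (by norm_num) (by norm_num)]
      norm_num
    have h4 : ε (h (k + 1)) ≤ ε (h k) / 8 := (hsucc k).2.1
    calc ‖∑' j, f (j + (k + 1))‖ ≤ ε (h (k + 1)) * (8 / 7) := by
          rw [← h3]; exact h1.trans h2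
      _ ≤ ε (h k) / 8 * (8 / 7) := by nlinarith [hεpos (h (k + 1))]
      _ = ε (h k) / 7 := by ring
  -- decomposition
  have hdecomp : ∀ k : ℕ, x = (∑ j ∈ Finset.range k, f j) + f k + ∑' j, f (j + (k + 1)) := by
    intro k
    rw [hx, ← Summable.sum_add_tsum_nat_add (k + 1) hsum, Finset.sum_range_succ]
  have hhead : ∀ k : ℕ, (∑ j ∈ Finset.range k, f j) ∈ Y (h k) := by
    intro k
    apply Submodule.sum_mem
    intro j hj
    apply Submodule.smul_mem
    have hj' : h j + 1 ≤ h k := hmono (Finset.mem_range.1 hj)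
    exact (hYstrict.monotone hj') (hyY j)
  refine ⟨x, 2, h, by norm_num, hmono, fun k => ?_⟩
  have hεk := hεpos (h k)
  constructor
  · -- lower bound
    have hlow : ε (h k) / 4 ≤ infDist x (Y (h k)) := by
      by_contra hcon
      push_neg at hcon
      obtain ⟨a, haY, hda⟩ := (infDist_lt_iff ⟨0, (Y (h k)).zero_mem⟩).1 hcon
      rw [dist_eq_norm] at hda
      -- write x - a = (f k - b) + tail
      set b : X := a - ∑ j ∈ Finset.range k, f j with hb
      have hbY : b ∈ Y (h k) := Submodule.sub_mem _ haY (hhead k)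
      have hxa : x - a = (f k - b) + ∑' j, f (j + (k + 1)) := by
        rw [hdecomp k, hb]; abel
      have hfb : ε (h k) / 2 ≤ ‖f k - b‖ := by
        have hzb : (ε (h k))⁻¹ • b ∈ Y (h k) := Submodule.smul_mem _ _ hbY
        have := hydist k _ hzb
        have heq : f k - b = ε (h k) • (y k - (ε (h k))⁻¹ • b) := by
          rw [smul_sub, smul_smul, mul_inv_cancel₀ hεk.ne', one_smul, hf]
        rw [heq, norm_smul, Real.norm_eq_abs, abs_of_pos hεk]
        calc ε (h k) / 2 = ε (h k) * (1 / 2) := by ring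
          _ ≤ ε (h k) * ‖y k - (ε (h k))⁻¹ • b‖ := by
              apply mul_le_mul_of_nonneg_left this hεk.le
      have htk := htail k
      have : ε (h k) / 2 - ε (h k) / 7 ≤ ‖x - a‖ := by
        rw [hxa]
        calc ε (h k) / 2 - ε (h k) / 7 ≤ ‖f k - b‖ - ‖∑' j, f (j + (k + 1))‖ := by linarith
          _ ≤ ‖(f k - b) + ∑' j, f (j + (k + 1))‖ := by
              have := norm_add_le (f k - b + ∑' j, f (j + (k + 1))) (-(∑' j, f (j + (k + 1))))
              simp only [add_neg_cancel_right, norm_neg] at this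
              linarith
      linarith
    calc δ (h k) * ε (h k) ≤ 1 / 4 * ε (h k) := by
          apply mul_le_mul_of_nonneg_right (hδ4 k) hεk.le
      _ = ε (h k) / 4 := by ring
      _ ≤ infDist x (Y (h k)) := hlow
  · -- upper bound
    have hup : infDist x (Y (h k)) ≤ dist x (∑ j ∈ Finset.range k, f j) :=
      infDist_le_dist_of_mem (hhead k)
    rw [dist_eq_norm] at hup
    have : ‖x - ∑ j ∈ Finset.range k, f j‖ ≤ 2 * ε (h k) := by
      have hxd : x - ∑ j ∈ Finset.range k, f j = f k + ∑' j, f (j + (k + 1)) := by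
        rw [hdecomp k]; abel
      rw [hxd]
      calc ‖f k + ∑' j, f (j + (k + 1))‖ ≤ ‖f k‖ + ‖∑' j, f (j + (k + 1))‖ := norm_add_le _ _
        _ ≤ ε (h k) + ε (h k) / 7 := by rw [hfnorm]; linarith [htail k]
        _ ≤ 2 * ε (h k) := by linarith
    linarith
end

section
/- Let X be a real Banach space and let {0} = X_0 ⊊ X_1 ⊊ X_2 ⊊ ⋯ ⊊ X_n ⊊ X_{n+1} ⊆ X be a finite chain of closed linear subspaces of X, and let ε_0 > ε_1 > ⋯ > ε_n > 0 be strictly decreasing positive reals. Then there exists x ∈ X_{n+1} such that E(x, X_k) = ε_k for every 0 ≤ k ≤ n. -/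
/-!
Build `x` from the top of the chain down. Given `z` with `E(z, X_{m+1}) < ε_m`, the function
`w ↦ E(z + w, X_m)` on the connected set `X_{m+1}` takes a value below `ε_m` (at `w = -a` for a
near-best approximation `a ∈ X_{m+1}` of `z`) and arbitrarily large values (along a line
`t • v` with `v ∈ X_{m+1} \ X_m`, since `X_m` is closed), so it takes the value `ε_m`.
Correcting `z + w` afterwards by elements of `X_m` does not change its distance to `X_m`, and
since `ε_m < ε_{m-1}` the corrected point satisfies the hypothesis one level down.
-/

open Metric

namespace Submodule

section NormedField

variable {𝕜 X : Type*} [NormedField 𝕜] [SeminormedAddCommGroup X] [NormedSpace 𝕜 X]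
  (p : Submodule 𝕜 X)

theorem infDist_eq_norm_mk (x : X) : infDist x p = ‖(Quotient.mk x : X ⧸ p)‖ :=
  (QuotientAddGroup.norm_mk (S := p.toAddSubgroup) x).symm

theorem infDist_add_of_mem {u : X} (hu : u ∈ p) (x : X) : infDist (x + u) p = infDist x p := by
  rw [infDist_eq_norm_mk, infDist_eq_norm_mk, Quotient.mk_add, (Quotient.mk_eq_zero p).2 hu,
    add_zero]

theorem infDist_smul (c : 𝕜) (x : X) : infDist (c • x) p = ‖c‖ * infDist x p := by
  rw [infDist_eq_norm_mk, infDist_eq_norm_mk, Quotient.mk_smul, norm_smul]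

end NormedField

theorem exists_le_infDist_add_smul {𝕜 X : Type*} [NontriviallyNormedField 𝕜]
    [SeminormedAddCommGroup X] [NormedSpace 𝕜 X] {p : Submodule 𝕜 X} (hp : IsClosed (p : Set X))
    {v : X} (hv : v ∉ p) (z : X) (R : ℝ) : ∃ c : 𝕜, R ≤ infDist (z + c • v) p := by
  have hd : 0 < infDist v p := (hp.notMem_iff_infDist_pos ⟨0, p.zero_mem⟩).1 hv
  obtain ⟨c, hc⟩ := NormedField.exists_lt_norm 𝕜 ((R + ‖z‖) / infDist v p)
  refine ⟨c, ?_⟩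
  have hlarge : R + ‖z‖ ≤ infDist (c • v) p := by
    rw [p.infDist_smul]
    exact ((div_lt_iff₀ hd).1 hc).le
  have htriangle : infDist (c • v) p ≤ infDist (z + c • v) p + ‖z‖ := by
    simpa using infDist_le_infDist_add_dist (s := (p : Set X)) (x := c • v) (y := z + c • v)
  linarith

theorem exists_mem_infDist_add_eq {X : Type*} [SeminormedAddCommGroup X] [NormedSpace ℝ X]
    {p q : Submodule ℝ X} (hp : IsClosed (p : Set X)) (hpq : p < q) {z : X} {r : ℝ}
    (hr : infDist z q < r) : ∃ w ∈ q, infDist (z + w) p = r := by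
  obtain ⟨a, ha, hza⟩ := (infDist_lt_iff ⟨0, q.zero_mem⟩).1 hr
  obtain ⟨v, hvq, hvp⟩ := SetLike.exists_of_lt hpq
  obtain ⟨t, ht⟩ := exists_le_infDist_add_smul hp hvp z r
  have hlow : infDist (z + -a) p ≤ r :=
    calc infDist (z + -a) p ≤ dist (z + -a) 0 := infDist_le_dist_of_mem p.zero_mem
      _ = dist z a := by rw [dist_zero_right, ← sub_eq_add_neg, dist_eq_norm]
      _ ≤ r := hza.le
  have hcont : Continuous fun w => infDist (z + w) p :=
    (continuous_infDist_pt _).comp (continuous_const_add z)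
  exact q.convex.isPreconnected.intermediate_value (q.neg_mem ha) (q.smul_mem t hvq)
    hcont.continuousOn ⟨hlow, ht⟩

end Submodule

theorem exists_add_mem_infDist_eq {X : Type*} [SeminormedAddCommGroup X] [NormedSpace ℝ X]
    {Y : ℕ → Submodule ℝ X} {ε : ℕ → ℝ} (m : ℕ) (hclosed : ∀ k ≤ m, IsClosed (Y k : Set X))
    (hlt : ∀ k ≤ m, Y k < Y (k + 1)) (hdec : ∀ k < m, ε (k + 1) < ε k) {z : X}
    (hz : infDist z (Y (m + 1)) < ε m) :
    ∃ u ∈ Y (m + 1), ∀ k ≤ m, infDist (z + u) (Y k) = ε k := by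
  induction m generalizing z with
  | zero =>
    obtain ⟨w, hw, hzw⟩ := Submodule.exists_mem_infDist_add_eq (hclosed 0 le_rfl) (hlt 0 le_rfl) hz
    refine ⟨w, hw, fun k hk => ?_⟩
    rwa [Nat.le_zero.1 hk]
  | succ m ih =>
    obtain ⟨w, hw, hzw⟩ :=
      Submodule.exists_mem_infDist_add_eq (hclosed (m + 1) le_rfl) (hlt (m + 1) le_rfl) hz
    obtain ⟨u, hu, hzwu⟩ := ih (fun k hk => hclosed k (by omega)) (fun k hk => hlt k (by omega))
      (fun k hk => hdec k (by omega)) (hzw ▸ hdec m (by omega))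
    refine ⟨w + u, add_mem hw ((hlt (m + 1) le_rfl).le hu), fun k hk => ?_⟩
    rw [← add_assoc]
    rcases Nat.le_succ_iff.1 hk with hk | rfl
    · exact hzwu k hk
    · rw [Submodule.infDist_add_of_mem _ hu, hzw]

theorem stmt18_general {X : Type*} [NormedAddCommGroup X] [NormedSpace ℝ X]
    (n : ℕ) (Y : ℕ → Submodule ℝ X)
    (hclosed : ∀ k, k ≤ n + 1 → IsClosed (Y k : Set X))
    (hlt : ∀ k, k ≤ n → Y k < Y (k + 1))
    (ε : ℕ → ℝ) (hlast : 0 < ε n)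
    (hdec : ∀ k, k < n → ε (k + 1) < ε k) :
    ∃ x ∈ Y (n + 1), ∀ k, k ≤ n → infDist x (Y k) = ε k := by
  have hzero : infDist (0 : X) (Y (n + 1)) < ε n := by
    rwa [infDist_zero_of_mem (Y (n + 1)).zero_mem]
  obtain ⟨x, hx, hdist⟩ :=
    exists_add_mem_infDist_eq n (fun k hk => hclosed k (by omega)) hlt hdec hzero
  exact ⟨x, hx, fun k hk => by simpa using hdist k hk⟩

theorem stmt18 {X : Type*} [NormedAddCommGroup X] [NormedSpace ℝ X] [CompleteSpace X]
    (n : ℕ) (Y : ℕ → Submodule ℝ X) (h0 : Y 0 = ⊥)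
    (hclosed : ∀ k, k ≤ n + 1 → IsClosed (Y k : Set X))
    (hlt : ∀ k, k ≤ n → Y k < Y (k + 1))
    (ε : ℕ → ℝ) (hlast : 0 < ε n)
    (hdec : ∀ k, k < n → ε (k + 1) < ε k) :
    ∃ x ∈ Y (n + 1), ∀ k, k ≤ n → infDist x (Y k) = ε k :=
  stmt18_general n Y hclosed hlt ε hlast hdec
end
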